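/- arXiv:math/9801016 — 8 statements merged into one kernel-verified Lean document; each statement's English description precedes it below -/
import Mathlib

section
/- The generating function for vertically convex polyominoes by area equals t(1-t)^3/(1-5t+7t^2-4t^3). Precisely, define the weight of a composition (a_1,...,a_r) of positive integers as t^{a_1+...+a_r} ∏_{i=1}^{r-1}(a_i+a_{i+1}-1). Then the formal power series f(t) = Σ over all nonempty compositions C of wt(C) satisfies f(t) = t(1-t)^3/(1-5t+7t^2-4t^3). -/
open PowerSeries Finset

/-- The weight-product of a composition: `∏ (aᵢ + aᵢ₊₁ - 1)` over adjacent parts. -/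
def adjWt (l : List ℕ) : ℕ := ((l.zip l.tail).map fun p => p.1 + p.2 - 1).prod

/-- `a n` = number of vertically (horizontally) convex polyominoes of area `n`:
the sum over all compositions of `n` of `∏ (aᵢ + aᵢ₊₁ - 1)`. -/
def vcp (n : ℕ) : ℕ := ∑ c : Composition n, adjWt c.blocks

def L : ℕ → Finset (List ℕ)
  | 0 => {[]}
  | (n+1) => (Finset.range (n+1)).biUnion
      (fun k => if h : k < n+1 then (L k).image (List.cons (n+1-k)) else ∅)

lemma mem_L : ∀ n (l : List ℕ), l ∈ L n ↔ l.sum = n ∧ ∀ x ∈ l, 0 < x := by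
  intro n
  induction n using Nat.strong_induction_on with
  | _ n ih =>
    intro l
    match n with
    | 0 =>
      simp only [L, Finset.mem_singleton]
      constructor
      · rintro rfl; simp
      · rintro ⟨hs, hp⟩
        match l with
        | [] => rfl
        | a :: t =>
          exfalso
          have := hp a (by simp)
          simp at hs
          omega
    | (m+1) =>
      rw [L]
      simp only [Finset.mem_biUnion, Finset.mem_range]
      constructor
      · rintro ⟨k, hk, hl⟩
        rw [dif_pos hk] at hl
        simp only [Finset.mem_image] at hl
        obtain ⟨t, ht, rfl⟩ := hl
        obtain ⟨hsum, hpos⟩ := (ih k hk t).1 ht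
        constructor
        · simp [hsum]; omega
        · intro x hx
          simp at hx
          rcases hx with rfl | hx
          · omega
          · exact hpos x hx
      · rintro ⟨hsum, hpos⟩
        match l with
        | [] => simp at hsum
        | a :: t =>
          simp at hsum
          have ha : 0 < a := hpos a (by simp)
          refine ⟨t.sum, by omega, ?_⟩
          rw [dif_pos (by omega)]
          simp only [Finset.mem_image]
          refine ⟨t, (ih t.sum (by omega) t).2 ⟨rfl, fun x hx => hpos x (by simp [hx])⟩, ?_⟩
          congr 1
          omega

lemma sum_L_succ (n : ℕ) (g : List ℕ → ℤ) :
    ∑ l ∈ L (n+1), g l = ∑ k ∈ Finset.range (n+1), ∑ l ∈ L k, g ((n+1-k) :: l) := by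
  rw [L, Finset.sum_biUnion]
  · refine Finset.sum_congr rfl fun k hk => ?_
    rw [dif_pos (Finset.mem_range.1 hk)]
    rw [Finset.sum_image]
    intro a _ b _ hab
    exact List.tail_eq_of_cons_eq hab
  · intro a ha b hb hab
    simp only [Finset.mem_coe, Finset.mem_range] at ha hb
    rw [Function.onFun, Finset.disjoint_left]
    intro l hla hlb
    rw [dif_pos ha] at hla
    rw [dif_pos hb] at hlb
    simp only [Finset.mem_image] at hla hlb
    obtain ⟨t, _, rfl⟩ := hla
    obtain ⟨t', _, h⟩ := hlb
    have : n+1-b = n+1-a := (List.head_eq_of_cons_eq h)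
    omega

lemma sum_comp (n : ℕ) (g : List ℕ → ℤ) :
    ∑ c : Composition n, g c.blocks = ∑ l ∈ L n, g l := by
  refine Finset.sum_nbij' (fun c => c.blocks)
    (fun l => if h : l ∈ L n then ⟨l, fun hi => ((mem_L n l).1 h).2 _ hi, ((mem_L n l).1 h).1⟩
      else Composition.ones n) ?_ ?_ ?_ ?_ ?_
  · intro c _
    exact (mem_L n c.blocks).2 ⟨c.blocks_sum, fun x hx => c.blocks_pos hx⟩
  · intro l hl
    exact Finset.mem_univ _
  · intro c _
    have h : c.blocks ∈ L n := (mem_L n c.blocks).2 ⟨c.blocks_sum, fun x hx => c.blocks_pos hx⟩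
    simp only [dif_pos h]
  · intro l hl
    simp only [dif_pos hl]
  · intro c _
    rfl

noncomputable section

def Sz (n : ℕ) : ℤ := ∑ l ∈ L n, (adjWt l : ℤ)
def Tz (n : ℕ) : ℤ := ∑ l ∈ L n, ((l.headI : ℤ) * adjWt l)

def SS : ℤ⟦X⟧ := PowerSeries.mk fun n => if n = 0 then 0 else Sz n
def TT : ℤ⟦X⟧ := PowerSeries.mk fun n => Tz n
def G1 : ℤ⟦X⟧ := PowerSeries.mk fun n => if n = 0 then 0 else (1:ℤ)
def G2 : ℤ⟦X⟧ := PowerSeries.mk fun n => (n:ℤ)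
def H1 : ℤ⟦X⟧ := PowerSeries.mk fun n => if n = 0 then 0 else (n:ℤ) - 1
def H2 : ℤ⟦X⟧ := PowerSeries.mk fun n => (n:ℤ) * ((n:ℤ) - 1)

lemma cmxp (f : ℤ⟦X⟧) (n d : ℕ) :
    (coeff n) (f * X ^ d) = if d ≤ n then coeff (n - d) f else 0 :=
  coeff_mul_X_pow' f d n

lemma L1 : G1 * (1 - X) = X := by
  have h : G1 * (1 - X) = G1 - G1 * X ^ 1 := by ring
  ext n
  rw [h, map_sub]
  simp only [cmxp, coeff_X]
  simp only [G1, coeff_mk]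
  rcases n with _ | _ | n <;> simp

lemma L2 : H1 * (1 - X) ^ 2 = X ^ 2 := by
  have h : H1 * (1 - X) ^ 2 = H1 - H1 * X ^ 1 - H1 * X ^ 1 + H1 * X ^ 2 := by ring
  ext n
  rw [h, map_add, map_sub, map_sub]
  simp only [cmxp, coeff_X_pow]
  simp only [H1, coeff_mk]
  rcases n with _ | _ | _ | n <;> simp <;> push_cast <;> ring

lemma L3 : G2 * (1 - X) ^ 2 = X := by
  have h : G2 * (1 - X) ^ 2 = G2 - G2 * X ^ 1 - G2 * X ^ 1 + G2 * X ^ 2 := by ring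
  ext n
  rw [h, map_add, map_sub, map_sub]
  simp only [cmxp, coeff_X]
  simp only [G2, coeff_mk]
  rcases n with _ | _ | _ | n <;> simp <;> push_cast <;> ring

lemma L4 : H2 * (1 - X) ^ 3 = 2 * X ^ 2 := by
  have h : H2 * (1 - X) ^ 3 =
      H2 - H2 * X ^ 1 - H2 * X ^ 1 - H2 * X ^ 1 + H2 * X ^ 2 + H2 * X ^ 2 + H2 * X ^ 2
        - H2 * X ^ 3 := by ring
  have h2 : ((2 : ℤ⟦X⟧) * X ^ 2) = X ^ 2 + X ^ 2 := by ring
  ext n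
  rw [h, h2, map_add, map_sub, map_add, map_add, map_add, map_sub, map_sub, map_sub]
  simp only [cmxp, coeff_X_pow]
  simp only [H2, coeff_mk]
  rcases n with _ | _ | _ | _ | n <;> simp <;> push_cast <;> ring

lemma adjWt_cons (a b : ℕ) (t : List ℕ) :
    adjWt (a :: b :: t) = (a + b - 1) * adjWt (b :: t) := by
  simp [adjWt]

lemma adjWt_single (a : ℕ) : adjWt [a] = 1 := by simp [adjWt]

lemma key (k a : ℕ) (hk : 0 < k) (ha : 0 < a) :
    ∑ l ∈ L k, (adjWt (a :: l) : ℤ) = Tz k + ((a:ℤ) - 1) * Sz k := by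
  rw [Tz, Sz, Finset.mul_sum, ← Finset.sum_add_distrib]
  refine Finset.sum_congr rfl fun l hl => ?_
  obtain ⟨hsum, hpos⟩ := (mem_L k l).1 hl
  match l with
  | [] => simp at hsum; omega
  | b :: t =>
    have hb : 0 < b := hpos b (by simp)
    rw [adjWt_cons]
    have hc : ((a + b - 1 : ℕ) : ℤ) = (a:ℤ) + b - 1 := by
      have : 1 ≤ a + b := by omega
      push_cast [Nat.cast_sub this]
      ring
    push_cast [hc]
    simp only [List.headI]
    ring

lemma keyT (k a : ℕ) (hk : 0 < k) (ha : 0 < a) :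
    ∑ l ∈ L k, ((a:ℤ) * adjWt (a :: l)) = (a:ℤ) * (Tz k + ((a:ℤ) - 1) * Sz k) := by
  rw [← key k a hk ha, Finset.mul_sum]

lemma Tz_zero : Tz 0 = 0 := by simp [Tz, L]

lemma Sz_zero : Sz 0 = 1 := by simp [Sz, L, adjWt]

lemma refl_sum (m : ℕ) (F : ℕ → ℤ) :
    ∑ j ∈ Finset.range (m+1), F j = ∑ k ∈ Finset.range (m+1), F (m-k) := by
  rw [← Finset.sum_range_reflect]
  simp

lemma M1 : SS = G1 + G1 * TT + H1 * SS := by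
  ext n
  rw [map_add, map_add, coeff_mul, coeff_mul,
    Finset.Nat.sum_antidiagonal_eq_sum_range_succ_mk,
    Finset.Nat.sum_antidiagonal_eq_sum_range_succ_mk]
  simp only [SS, TT, G1, H1, coeff_mk]
  match n with
  | 0 => simp
  | (m+1) =>
    simp only [Nat.succ_ne_zero, if_false]
    have lhs : Sz (m+1) = ∑ k ∈ Finset.range (m+1), ∑ l ∈ L k, (adjWt ((m+1-k) :: l) : ℤ) := by
      rw [Sz, sum_L_succ (g := fun l => (adjWt l : ℤ))]
    rw [lhs]
    rw [refl_sum (m+1) (fun j => (if j = 0 then (0:ℤ) else 1) * Tz (m+1-j)),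
        refl_sum (m+1) (fun j => (if j = 0 then (0:ℤ) else (j:ℤ)-1) *
          (if m+1-j = 0 then 0 else Sz (m+1-j)))]
    rw [Finset.sum_range_succ (fun k => (if m+1-k = 0 then (0:ℤ) else 1) * Tz (m+1-(m+1-k))),
        Finset.sum_range_succ (fun k => (if m+1-k = 0 then (0:ℤ) else ((m+1-k:ℕ):ℤ)-1) *
          (if m+1-(m+1-k) = 0 then 0 else Sz (m+1-(m+1-k))))]
    norm_num
    have eL : ∑ k ∈ Finset.range (m+1), ∑ l ∈ L k, (adjWt ((m+1-k) :: l) : ℤ)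
        = 1 + ∑ k ∈ Finset.range m, (Tz (k+1) + (((m:ℤ) - k) - 1) * Sz (k+1)) := by
      rw [Finset.sum_range_succ']
      have h0 : ∑ l ∈ L 0, (adjWt ((m+1-0) :: l) : ℤ) = 1 := by simp [L, adjWt_single]
      rw [h0, add_comm]
      congr 1
      refine Finset.sum_congr rfl fun k hk => ?_
      have hk' := Finset.mem_range.1 hk
      rw [key (k+1) (m+1-(k+1)) (Nat.succ_pos k) (by omega)]
      have hc : ((m+1-(k+1) : ℕ) : ℤ) = (m:ℤ) - k := by omega
      rw [hc]
    have eR1 : ∑ x ∈ Finset.range (m+1), (if m+1-x = 0 then (0:ℤ) else Tz (m+1-(m+1-x)))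
        = ∑ k ∈ Finset.range m, Tz (k+1) := by
      rw [Finset.sum_range_succ']
      have h0 : (if m+1-0 = 0 then (0:ℤ) else Tz (m+1-(m+1-0))) = 0 := by
        simp [Tz_zero]
      rw [h0, add_zero]
      refine Finset.sum_congr rfl fun k hk => ?_
      have hk' := Finset.mem_range.1 hk
      rw [if_neg (by omega : ¬ m+1-(k+1) = 0)]
      congr 1
      omega
    have eR2 : ∑ x ∈ Finset.range (m+1),
          (if m+1-(m+1-x) = 0 then (0:ℤ)
            else if m+1-x = 0 then 0 else (((m+1-x:ℕ):ℤ)-1) * Sz (m+1-(m+1-x)))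
        = ∑ k ∈ Finset.range m, (((m:ℤ) - k) - 1) * Sz (k+1) := by
      rw [Finset.sum_range_succ']
      have h0 : (if m+1-(m+1-0) = 0 then (0:ℤ)
          else if m+1-0 = 0 then 0 else (((m+1-0:ℕ):ℤ)-1) * Sz (m+1-(m+1-0))) = 0 := by
        simp
      rw [h0, add_zero]
      refine Finset.sum_congr rfl fun k hk => ?_
      have hk' := Finset.mem_range.1 hk
      rw [if_neg (by omega : ¬ m+1-(m+1-(k+1)) = 0), if_neg (by omega : ¬ m+1-(k+1) = 0)]
      have h1 : m+1-(m+1-(k+1)) = k+1 := by omega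
      have h2 : ((m+1-(k+1) : ℕ) : ℤ) = (m:ℤ) - k := by omega
      rw [h1, h2]
    rw [eL, eR1, eR2, Finset.sum_add_distrib]
    ring

lemma M2 : TT = G2 + G2 * TT + H2 * SS := by
  ext n
  rw [map_add, map_add, coeff_mul, coeff_mul,
    Finset.Nat.sum_antidiagonal_eq_sum_range_succ_mk,
    Finset.Nat.sum_antidiagonal_eq_sum_range_succ_mk]
  simp only [SS, TT, G2, H2, coeff_mk]
  match n with
  | 0 => simp [Tz_zero]
  | (m+1) =>
    have lhs : Tz (m+1) = ∑ k ∈ Finset.range (m+1),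
        ∑ l ∈ L k, (((m+1-k : ℕ):ℤ) * adjWt ((m+1-k) :: l)) := by
      rw [Tz, sum_L_succ (g := fun l => ((l.headI : ℤ) * adjWt l))]
      refine Finset.sum_congr rfl fun k hk => Finset.sum_congr rfl fun l hl => by
        simp [List.headI]
    rw [lhs]
    rw [refl_sum (m+1) (fun j => ((j:ℕ):ℤ) * Tz (m+1-j)),
        refl_sum (m+1) (fun j => ((j:ℤ) * ((j:ℤ)-1)) *
          (if m+1-j = 0 then 0 else Sz (m+1-j)))]
    rw [Finset.sum_range_succ (fun k => ((m+1-k : ℕ):ℤ) * Tz (m+1-(m+1-k))),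
        Finset.sum_range_succ (fun k => (((m+1-k:ℕ):ℤ) * (((m+1-k:ℕ):ℤ)-1)) *
          (if m+1-(m+1-k) = 0 then 0 else Sz (m+1-(m+1-k))))]
    norm_num
    have eL : ∑ k ∈ Finset.range (m+1),
          ∑ l ∈ L k, (((m+1-k : ℕ):ℤ) * adjWt ((m+1-k) :: l))
        = ((m:ℤ)+1) + ∑ k ∈ Finset.range m,
            (((m:ℤ)-k) * Tz (k+1) + ((m:ℤ)-k) * (((m:ℤ)-k) - 1) * Sz (k+1)) := by
      rw [Finset.sum_range_succ']
      have h0 : ∑ l ∈ L 0, (((m+1-0 : ℕ):ℤ) * adjWt ((m+1-0) :: l)) = (m:ℤ)+1 := by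
        simp [L, adjWt_single]
      rw [h0, add_comm]
      congr 1
      refine Finset.sum_congr rfl fun k hk => ?_
      have hk' := Finset.mem_range.1 hk
      rw [keyT (k+1) (m+1-(k+1)) (Nat.succ_pos k) (by omega)]
      have hc : ((m+1-(k+1) : ℕ) : ℤ) = (m:ℤ) - k := by omega
      rw [hc]
      ring
    have eR1 : ∑ x ∈ Finset.range (m+1), (((m+1-x : ℕ):ℤ) * Tz (m+1-(m+1-x)))
        = ∑ k ∈ Finset.range m, ((m:ℤ)-k) * Tz (k+1) := by
      rw [Finset.sum_range_succ']
      have h0 : (((m+1-0 : ℕ):ℤ) * Tz (m+1-(m+1-0))) = 0 := by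
        simp [Tz_zero]
      rw [h0, add_zero]
      refine Finset.sum_congr rfl fun k hk => ?_
      have hk' := Finset.mem_range.1 hk
      have h1 : m+1-(m+1-(k+1)) = k+1 := by omega
      have h2 : ((m+1-(k+1) : ℕ) : ℤ) = (m:ℤ) - k := by omega
      rw [h1, h2]
    have eR2 : ∑ x ∈ Finset.range (m+1),
          (if m+1-(m+1-x) = 0 then (0:ℤ)
            else ((m+1-x:ℕ):ℤ) * (((m+1-x:ℕ):ℤ)-1) * Sz (m+1-(m+1-x)))
        = ∑ k ∈ Finset.range m, ((m:ℤ)-k) * (((m:ℤ)-k) - 1) * Sz (k+1) := by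
      rw [Finset.sum_range_succ']
      have h0 : (if m+1-(m+1-0) = 0 then (0:ℤ)
          else ((m+1-0:ℕ):ℤ) * (((m+1-0:ℕ):ℤ)-1) * Sz (m+1-(m+1-0))) = 0 := by
        simp
      rw [h0, add_zero]
      refine Finset.sum_congr rfl fun k hk => ?_
      have hk' := Finset.mem_range.1 hk
      rw [if_neg (by omega : ¬ m+1-(m+1-(k+1)) = 0)]
      have h1 : m+1-(m+1-(k+1)) = k+1 := by omega
      have h2 : ((m+1-(k+1) : ℕ) : ℤ) = (m:ℤ) - k := by omega
      rw [h1, h2]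
    rw [eL, eR1, eR2, Finset.sum_add_distrib]
    push_cast
    ring

lemma vcp_eq (n : ℕ) : (vcp n : ℤ) = Sz n := by
  rw [Sz, ← sum_comp n (fun l => (adjWt l : ℤ)), vcp]
  push_cast
  rfl

/-- The generating function `f(t) = Σ_{nonempty compositions} wt` satisfies
`f(t) = t(1-t)³/(1-5t+7t²-4t³)`. -/
theorem temperley_gf :
    (PowerSeries.mk fun n => if n = 0 then 0 else (vcp n : ℤ)) *
      (1 - 5 * X + 7 * X ^ 2 - 4 * X ^ 3) = X * (1 - X) ^ 3 := by
  have hF : (PowerSeries.mk fun n => if n = 0 then 0 else (vcp n : ℤ)) = SS := by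
    ext n
    simp only [coeff_mk, SS]
    split
    · rfl
    · exact vcp_eq n
  rw [hF]
  linear_combination (1-3*X+X^2)*(1-X)^2 * M1 + (1-3*X+X^2)*(1+TT)*(1-X) * L1
    + (1-3*X+X^2)*SS*L2 + X*(1-X)^3*M2 + X*(1+TT)*(1-X)*L3 + X*SS*L4

end
end

section
/- The number of leftist horizontally convex polyominoes of area n is the Fibonacci number F_{2n-1}. Precisely, define b(n) = Σ over compositions (a_1,...,a_r) of n of ∏_{i=2}^{r} a_i. Then b(n) = F_{2n-1}, where F_1 = F_2 = 1. -/
open Finset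

lemma cons_headI_tail {l : List ℕ} (h : l ≠ []) : l.headI :: l.tail = l := by
  cases l with
  | nil => exact absurd rfl h
  | cons a t => rfl

lemma blocks_ne_nil {n : ℕ} (hn : 0 < n) (c : Composition n) : c.blocks ≠ [] := by
  intro h
  have := c.blocks_sum
  rw [h] at this
  simp at this
  omega

lemma headI_pos {n : ℕ} (hn : 0 < n) (c : Composition n) : 0 < c.blocks.headI := by
  apply c.blocks_pos
  conv => rw [← cons_headI_tail (blocks_ne_nil hn c)]
  exact List.mem_cons_self

lemma headI_le {n : ℕ} (hn : 0 < n) (c : Composition n) : c.blocks.headI ≤ n := by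
  have := c.blocks_sum
  conv_lhs at this => rw [← cons_headI_tail (blocks_ne_nil hn c)]
  simp at this
  omega

lemma tail_sum {n : ℕ} (hn : 0 < n) (c : Composition n) :
    c.blocks.tail.sum = n - c.blocks.headI := by
  have := c.blocks_sum
  conv_lhs at this => rw [← cons_headI_tail (blocks_ne_nil hn c)]
  simp at this
  omega

lemma comp_heq : ∀ {m m' : ℕ}, m = m' → ∀ {c : Composition m} {c' : Composition m'},
    c.blocks = c'.blocks → HEq c c' := by
  rintro m m' rfl c c' hb
  exact heq_of_eq (Composition.ext hb)

/-- Splitting a composition of `n ≥ 1` into its first block `n - i` and a composition of `i`. -/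
def splitEquiv (n : ℕ) (hn : 0 < n) : Composition n ≃ Σ i : Fin n, Composition i where
  toFun c :=
    ⟨⟨n - c.blocks.headI, by have := headI_pos hn c; omega⟩,
     ⟨c.blocks.tail, fun hi => c.blocks_pos (List.mem_of_mem_tail hi), by
       have := tail_sum hn c; have := headI_le hn c; simp; omega⟩⟩
  invFun := fun ⟨i, d⟩ =>
    ⟨(n - i) :: d.blocks, by
      intro j hj
      rcases List.mem_cons.1 hj with h | h
      · have := i.2; omega
      · exact d.blocks_pos h, by
      have hi := i.2.le
      simp [d.blocks_sum, Nat.sub_add_cancel hi]⟩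
  left_inv c := by
    have h1 := headI_le hn c
    have h2 := headI_pos hn c
    ext1
    simp only
    rw [show n - (n - c.blocks.headI) = c.blocks.headI by omega]
    exact cons_headI_tail (blocks_ne_nil hn c)
  right_inv := fun ⟨i, d⟩ => by
    have hi := i.2
    refine Sigma.ext ?_ ?_
    · apply Fin.ext
      show n - ((n - (i:ℕ)) :: d.blocks).headI = i
      simp; omega
    · exact comp_heq (by show n - ((n - (i:ℕ)) :: d.blocks).headI = i; simp; omega) rfl

/-- `leftist n` = number of leftist horizontally convex polyominoes of area `n`:
the sum over compositions `(a₁,…,a_r)` of `n` of `a₂ a₃ ⋯ a_r`. -/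
def leftist (n : ℕ) : ℕ := ∑ c : Composition n, c.blocks.tail.prod

/-- `A n` = sum over compositions of `n` of the full product of blocks. -/
def A (n : ℕ) : ℕ := ∑ c : Composition n, c.blocks.prod

lemma sum_split (n : ℕ) (hn : 0 < n) (g : List ℕ → ℕ) :
    ∑ c : Composition n, g c.blocks =
      ∑ i : Fin n, ∑ d : Composition i, g ((n - (i : ℕ)) :: d.blocks) := by
  rw [Fintype.sum_equiv (splitEquiv n hn) _
      (fun s : Σ i : Fin n, Composition (i : ℕ) => g ((n - (s.1 : ℕ)) :: s.2.blocks))]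
  · rw [← Finset.univ_sigma_univ, Finset.sum_sigma]
  · intro c
    have h1 := headI_le hn c
    show g c.blocks = g ((n - (n - c.blocks.headI)) :: c.blocks.tail)
    rw [show n - (n - c.blocks.headI) = c.blocks.headI by omega,
      cons_headI_tail (blocks_ne_nil hn c)]

instance : Unique (Composition 0) where
  default := Composition.ones 0
  uniq c := by
    apply Composition.ext
    have hs := c.blocks_sum
    cases hc : c.blocks with
    | nil => rfl
    | cons a t =>
      have ha : 0 < a := c.blocks_pos (hc ▸ List.mem_cons_self (a := a) (l := t))
      rw [hc] at hs
      simp at hs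
      omega

lemma A_zero : A 0 = 1 := by
  rw [A, Fintype.sum_unique]
  rfl

lemma A_rec (n : ℕ) (hn : 0 < n) : A n = ∑ i ∈ Finset.range n, (n - i) * A i := by
  rw [A, sum_split n hn List.prod, ← Fin.sum_univ_eq_sum_range]
  apply Finset.sum_congr rfl
  intro i _
  rw [A, Finset.mul_sum]
  apply Finset.sum_congr rfl
  intro d _
  simp

lemma leftist_rec (n : ℕ) (hn : 0 < n) : leftist n = ∑ i ∈ Finset.range n, A i := by
  rw [leftist, sum_split n hn (fun l => l.tail.prod), ← Fin.sum_univ_eq_sum_range]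
  apply Finset.sum_congr rfl
  intro i _
  rfl

lemma fibJ (n : ℕ) : 1 + ∑ i ∈ Finset.range n, Nat.fib (2 * i + 2) = Nat.fib (2 * n + 1) := by
  induction n with
  | zero => simp
  | succ m ih =>
    rw [Finset.sum_range_succ, ← add_assoc, ih]
    have h1 : Nat.fib (2 * m + 2) = Nat.fib (2 * m) + Nat.fib (2 * m + 1) := Nat.fib_add_two
    have h2 : Nat.fib (2 * (m + 1) + 1) = Nat.fib (2 * m + 1) + Nat.fib (2 * m + 2) := by
      rw [show 2 * (m + 1) + 1 = (2 * m + 1) + 2 by ring]; exact Nat.fib_add_two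
    omega

lemma fibK (n : ℕ) : 1 + ∑ i ∈ Finset.range (n + 1), Nat.fib (2 * i) = Nat.fib (2 * n + 1) := by
  rw [Finset.sum_range_succ']
  simp only [show ∀ i, 2 * (i + 1) = 2 * i + 2 from fun i => by ring]
  simpa using fibJ n

lemma fibI (n : ℕ) :
    (∑ i ∈ Finset.range n, (n - i) * Nat.fib (2 * i)) + n = Nat.fib (2 * n) := by
  induction n with
  | zero => simp
  | succ m ih =>
    have h1 : ∑ i ∈ Finset.range (m + 1), (m + 1 - i) * Nat.fib (2 * i) =
        (∑ i ∈ Finset.range (m + 1), (m - i) * Nat.fib (2 * i)) +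
          ∑ i ∈ Finset.range (m + 1), Nat.fib (2 * i) := by
      rw [← Finset.sum_add_distrib]
      apply Finset.sum_congr rfl
      intro i hi
      have := Finset.mem_range.1 hi
      rw [show m + 1 - i = (m - i) + 1 by omega, add_mul, one_mul]
    have h2 : ∑ i ∈ Finset.range (m + 1), (m - i) * Nat.fib (2 * i) =
        ∑ i ∈ Finset.range m, (m - i) * Nat.fib (2 * i) := by
      rw [Finset.sum_range_succ]
      simp
    have h3 := fibK m
    have h4 : Nat.fib (2 * (m + 1)) = Nat.fib (2 * m) + Nat.fib (2 * m + 1) := by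
      rw [show 2 * (m + 1) = 2 * m + 2 by ring, Nat.fib_add_two]
    omega

lemma A_fib : ∀ n : ℕ, 0 < n → A n = Nat.fib (2 * n) := by
  intro n
  induction n using Nat.strong_induction_on with
  | _ n ih =>
    intro hn
    obtain ⟨m, rfl⟩ : ∃ m, n = m + 1 := ⟨n - 1, by omega⟩
    rw [A_rec _ hn, Finset.sum_range_succ']
    have hA : ∑ i ∈ Finset.range m, (m + 1 - (i + 1)) * A (i + 1) =
        ∑ i ∈ Finset.range m, (m + 1 - (i + 1)) * Nat.fib (2 * (i + 1)) := by
      apply Finset.sum_congr rfl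
      intro i hi
      rw [ih (i + 1) (by have := Finset.mem_range.1 hi; omega) (by omega)]
    rw [hA, A_zero]
    have := fibI (m + 1)
    rw [Finset.sum_range_succ'] at this
    simp only [Nat.sub_zero, Nat.fib_zero, mul_zero, mul_one, add_zero] at *
    omega

/-- The number of leftist horizontally convex polyominoes of area `n` is `F_{2n-1}`
(Fibonacci with `F₁ = F₂ = 1`). -/
theorem leftist_eq_fib : ∀ n : ℕ, 1 ≤ n → leftist n = Nat.fib (2 * n - 1) := by
  intro n hn
  obtain ⟨m, rfl⟩ : ∃ m, n = m + 1 := ⟨n - 1, by omega⟩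
  rw [leftist_rec _ hn, Finset.sum_range_succ', A_zero]
  have hA : ∑ i ∈ Finset.range m, A (i + 1) =
      ∑ i ∈ Finset.range m, Nat.fib (2 * i + 2) := by
    apply Finset.sum_congr rfl
    intro i _
    rw [A_fib (i + 1) (by omega)]
    ring_nf
  rw [hA, show 2 * (m + 1) - 1 = 2 * m + 1 by omega, ← fibJ m]
  omega
end

section
/- The sequence b(n) = Σ over compositions (a_1,...,a_r) of n of ∏_{i=2}^r a_i satisfies the recurrence b(n) = 3b(n-1) - b(n-2) for n ≥ 3, with b(1) = 1, b(2) = 2. -/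
/-- Total: sum over compositions of product of all parts. -/
def total (n : ℕ) : ℕ := ∑ c : Composition n, c.blocks.prod

lemma comp_blocks_ne_nil {n : ℕ} (c : Composition (n + 1)) : c.blocks ≠ [] := by
  intro h
  have := c.blocks_sum
  rw [h] at this
  simp at this

lemma comp_headI_tail {n : ℕ} (c : Composition (n + 1)) :
    c.blocks.headI :: c.blocks.tail = c.blocks := by
  cases h : c.blocks with
  | nil => exact absurd h (comp_blocks_ne_nil c)
  | cons a l => simp

lemma comp_headI_pos {n : ℕ} (c : Composition (n + 1)) : 0 < c.blocks.headI := by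
  apply c.blocks_pos
  rw [← comp_headI_tail c]
  exact List.mem_cons_self

/-- prepend a `1`. -/
def consOne {n : ℕ} (c : Composition n) : Composition (n + 1) :=
  ⟨1 :: c.blocks, by
    intro i hi
    rcases List.mem_cons.1 hi with h | h
    · omega
    · exact c.blocks_pos h, by simp [c.blocks_sum]; omega⟩

/-- increment the first part. -/
def bump {n : ℕ} (c : Composition (n + 1)) : Composition (n + 2) :=
  ⟨(c.blocks.headI + 1) :: c.blocks.tail, by
    intro i hi
    rcases List.mem_cons.1 hi with h | h
    · omega
    · exact c.blocks_pos (List.mem_of_mem_tail h), by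
      have h1 : c.blocks.headI + c.blocks.tail.sum = n + 1 := by
        have := c.blocks_sum
        rw [← comp_headI_tail c] at this
        simpa using this
      simp only [List.sum_cons]
      omega⟩

def splitMap {n : ℕ} : Composition (n + 1) ⊕ Composition (n + 1) → Composition (n + 2) :=
  Sum.elim consOne bump

lemma splitMap_bij {n : ℕ} : Function.Bijective (splitMap (n := n)) := by
  constructor
  · rintro (c | c) (d | d) h <;>
      simp only [splitMap, Sum.elim_inl, Sum.elim_inr, consOne, bump,
        Composition.mk.injEq, List.cons.injEq] at h
    · exact congrArg Sum.inl (Composition.ext h.2)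
    · exact absurd h.1 (by have := comp_headI_pos d; omega)
    · exact absurd h.1 (by have := comp_headI_pos c; omega)
    · refine congrArg Sum.inr (Composition.ext ?_)
      rw [← comp_headI_tail c, ← comp_headI_tail d, h.2]
      congr 1
      omega
  · intro c
    rcases Nat.lt_or_ge 1 c.blocks.headI with h | h
    · -- headI ≥ 2, comes from bump
      have hsum : c.blocks.headI + c.blocks.tail.sum = n + 2 := by
        have := c.blocks_sum
        rw [← comp_headI_tail c] at this
        simpa using this
      refine ⟨Sum.inr ⟨(c.blocks.headI - 1) :: c.blocks.tail, ?_, ?_⟩, ?_⟩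
      · intro i hi
        rcases List.mem_cons.1 hi with h' | h'
        · omega
        · exact c.blocks_pos (List.mem_of_mem_tail h')
      · simp only [List.sum_cons]; omega
      · apply Composition.ext
        simp only [splitMap, Sum.elim_inr, bump]
        simp only [List.headI_cons, List.tail_cons]
        rw [show c.blocks.headI - 1 + 1 = c.blocks.headI by omega]
        exact comp_headI_tail c
    · -- headI = 1, comes from consOne
      have h1 : c.blocks.headI = 1 := le_antisymm h (comp_headI_pos c)
      have hsum : c.blocks.headI + c.blocks.tail.sum = n + 2 := by
        have := c.blocks_sum
        rw [← comp_headI_tail c] at this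
        simpa using this
      refine ⟨Sum.inl ⟨c.blocks.tail, ?_, by omega⟩, ?_⟩
      · intro i hi
        exact c.blocks_pos (List.mem_of_mem_tail hi)
      · apply Composition.ext
        simp only [splitMap, Sum.elim_inl, consOne]
        have := comp_headI_tail c
        rw [h1] at this
        exact this

lemma leftist_succ (n : ℕ) : leftist (n + 2) = total (n + 1) + leftist (n + 1) := by
  unfold leftist total
  rw [← Fintype.sum_bijective _ (splitMap_bij (n := n)) _ _ (fun _ => rfl)]
  rw [Fintype.sum_sum_type]
  have hl : ∀ c : Composition (n + 1),
      (splitMap (Sum.inl c)).blocks.tail.prod = c.blocks.prod := fun c => by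
    simp [splitMap, consOne]
  have hr : ∀ c : Composition (n + 1),
      (splitMap (Sum.inr c)).blocks.tail.prod = c.blocks.tail.prod := fun c => by
    simp [splitMap, bump]
  simp only [hl, hr]

lemma total_succ (n : ℕ) : total (n + 2) = 2 * total (n + 1) + leftist (n + 1) := by
  unfold leftist total
  rw [← Fintype.sum_bijective _ (splitMap_bij (n := n)) _ _ (fun _ => rfl)]
  rw [Fintype.sum_sum_type]
  have h1 : ∑ c : Composition (n + 1), (splitMap (Sum.inl c)).blocks.prod
      = ∑ c : Composition (n + 1), c.blocks.prod := by
    apply Fintype.sum_congr; intro c; simp [splitMap, consOne]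
  have h2 : ∑ c : Composition (n + 1), (splitMap (Sum.inr c)).blocks.prod
      = ∑ c : Composition (n + 1), (c.blocks.prod + c.blocks.tail.prod) := by
    apply Fintype.sum_congr
    intro c
    simp only [splitMap, Sum.elim_inr, bump, List.prod_cons]
    have : c.blocks.prod = c.blocks.headI * c.blocks.tail.prod := by
      conv_lhs => rw [← comp_headI_tail c]
      simp
    rw [this]; ring
  rw [h1, h2, Finset.sum_add_distrib]
  ring

instance : Unique (Composition 1) where
  default := ⟨[1], by intro i hi; simp at hi; omega, by simp⟩
  uniq c := by
    apply Composition.ext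
    cases h : c.blocks with
    | nil => exact absurd h (comp_blocks_ne_nil c)
    | cons a l =>
      have hs := c.blocks_sum
      rw [h] at hs
      simp only [List.sum_cons] at hs
      have ha : 0 < a := c.blocks_pos (h ▸ List.mem_cons_self (a := a) (l := l))
      cases l with
      | nil =>
        have : a = 1 := by simpa using hs
        simp [this]
      | cons b m =>
        exfalso
        have hb : 0 < b := c.blocks_pos (h ▸ (by simp))
        simp only [List.sum_cons] at hs
        omega

lemma leftist_one : leftist 1 = 1 := by
  rw [leftist, Fintype.sum_unique]
  rfl

lemma total_one : total 1 = 1 := by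
  rw [total, Fintype.sum_unique]
  rfl

lemma leftist_two : leftist 2 = 2 := by
  have h := leftist_succ 0
  rw [total_one, leftist_one] at h
  exact h

lemma leftist_rec_s4 (n : ℕ) :
    leftist (n + 3) + leftist (n + 1) = 3 * leftist (n + 2) := by
  have h1 : leftist (n + 3) = total (n + 2) + leftist (n + 2) := leftist_succ (n + 1)
  have h2 : total (n + 2) = 2 * total (n + 1) + leftist (n + 1) := total_succ n
  have h3 : leftist (n + 2) = total (n + 1) + leftist (n + 1) := leftist_succ n
  omega

theorem leftist_recurrence :
    leftist 1 = 1 ∧ leftist 2 = 2 ∧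
      ∀ n, 3 ≤ n → (leftist n : ℤ) = 3 * leftist (n - 1) - leftist (n - 2) := by
  refine ⟨leftist_one, leftist_two, ?_⟩
  intro n hn
  obtain ⟨k, rfl⟩ : ∃ k, n = k + 3 := ⟨n - 3, by omega⟩
  have := leftist_rec_s4 k
  have e1 : k + 3 - 1 = k + 2 := by omega
  have e2 : k + 3 - 2 = k + 1 := by omega
  rw [e1, e2]
  omega
end

section
/- Define c(n) = Σ over compositions (a_1,...,a_r) of n of ∏_{i=1}^{r-1} a_i·a_{i+1} (counting zig-zag LEGO towers with perpendicular consecutive floors). Then the generating function Σ_n c(n) t^n equals t(1-3t+2t^2-t^3)/(1-5t+6t^2-3t^3+t^4). -/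
open PowerSeries

/-- `zigzag n` = Σ over compositions `(a₁,…,a_r)` of `n` of `∏ aᵢ aᵢ₊₁` over adjacent
pairs (zig-zag LEGO towers with perpendicular consecutive floors). -/
def zigzag (n : ℕ) : ℕ :=
  ∑ c : Composition n, ((c.blocks.zip c.blocks.tail).map fun p => p.1 * p.2).prod

open Finset

namespace ZigzagAux

/-- weight of a list -/
def wt (l : List ℕ) : ℕ := ((l.zip l.tail).map fun p => p.1 * p.2).prod

@[simp] lemma wt_nil : wt [] = 1 := rfl
@[simp] lemma wt_single (a : ℕ) : wt [a] = 1 := rfl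

lemma wt_cons (a : ℕ) (l : List ℕ) (h : l ≠ []) :
    wt (a :: l) = a * (l.headI * wt l) := by
  cases l with
  | nil => exact absurd rfl h
  | cons b t => simp [wt, List.zip, mul_assoc]

/-- Finset of compositions of `n` as lists. -/
def F : ℕ → Finset (List ℕ)
  | 0 => {[]}
  | (n+1) => (Finset.range (n+1)).attach.biUnion fun k =>
      (F k.1).image (List.cons (n+1-k.1))
  decreasing_by exact Finset.mem_range.mp k.2

lemma mem_F {n : ℕ} {l : List ℕ} : l ∈ F n ↔ l.sum = n ∧ ∀ x ∈ l, x ≠ 0 := by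
  induction n using Nat.strong_induction_on generalizing l with
  | _ n ih =>
    match n with
    | 0 =>
      simp only [F, Finset.mem_singleton]
      constructor
      · rintro rfl; simp
      · rintro ⟨hs, hp⟩
        cases l with
        | nil => rfl
        | cons a t =>
          exact absurd (Nat.eq_zero_of_add_eq_zero_right hs) (hp a (by simp))
    | (n+1) =>
      rw [F]
      simp only [Finset.mem_biUnion, Finset.mem_attach, Finset.mem_image, true_and,
        Subtype.exists]
      constructor
      · rintro ⟨k, hk, t, ht, rfl⟩
        have hk' := Finset.mem_range.mp hk
        have := (ih k hk').mp ht
        refine ⟨?_, ?_⟩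
        · simp only [List.sum_cons, this.1]; omega
        · intro x hx
          rcases List.mem_cons.mp hx with rfl | hx
          · omega
          · exact this.2 x hx
      · rintro ⟨hs, hp⟩
        cases l with
        | nil => simp at hs
        | cons a t =>
          have ha : a ≠ 0 := hp a (by simp)
          have hts : t.sum = n + 1 - a := by simp at hs; omega
          have hta : t.sum < n + 1 := by omega
          refine ⟨t.sum, Finset.mem_range.mpr hta, t,
            (ih t.sum hta).mpr ⟨rfl, fun x hx => hp x (by simp [hx])⟩, ?_⟩
          simp only [List.sum_cons] at hs
          congr 1
          omega

lemma not_nil_mem_F {n : ℕ} (hn : n ≠ 0) : ([] : List ℕ) ∉ F n := by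
  intro h
  have := (mem_F.mp h).1
  simp at this
  exact hn this.symm

lemma F_succ_sum {M : Type*} [AddCommMonoid M] (n : ℕ) (f : List ℕ → M) :
    ∑ l ∈ F (n+1), f l = ∑ k ∈ Finset.range (n+1), ∑ l ∈ F k, f ((n+1-k) :: l) := by
  rw [show F (n+1) = (Finset.range (n+1)).attach.biUnion
      (fun k => (F k.1).image (List.cons (n+1-k.1))) from by rw [F]]
  rw [Finset.sum_biUnion]
  · rw [← Finset.sum_attach (Finset.range (n+1))
      (fun k => ∑ l ∈ F k, f ((n+1-k) :: l))]
    refine Finset.sum_congr rfl fun k _ => ?_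
    rw [Finset.sum_image]
    intro a _ b _ h
    exact (List.cons.injEq _ _ _ _ ▸ h).2
  · intro a _ b _ hab
    simp only [Finset.disjoint_left, Finset.mem_image]
    rintro l ⟨t, _, rfl⟩ ⟨s, _, h⟩
    have ha := Finset.mem_range.mp a.2
    have hb := Finset.mem_range.mp b.2
    have : n + 1 - b.1 = n + 1 - a.1 := (List.cons.injEq _ _ _ _ ▸ h).1
    exact hab (Subtype.ext (by omega))

end ZigzagAux

namespace ZigzagAux

/-- head-weighted sum -/
def Tfun (n : ℕ) : ℕ := ∑ l ∈ F n, l.headI * wt l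

@[simp] lemma Tfun_zero : Tfun 0 = 0 := by
  simp [Tfun, F]

def Sfun (n : ℕ) : ℕ := ∑ l ∈ F n, wt l

lemma zigzag_eq (n : ℕ) : zigzag n = Sfun n := by
  unfold zigzag Sfun
  rw [← Finset.sum_attach (F n) wt]
  refine Finset.sum_bij (fun c _ => ⟨c.blocks, mem_F.mpr
      ⟨c.blocks_sum, fun x hx => (c.blocks_pos hx).ne'⟩⟩) (fun _ _ => Finset.mem_attach _ _)
    ?_ ?_ ?_
  · intro a _ b _ h
    exact Composition.ext (congrArg Subtype.val h)
  · rintro ⟨l, hl⟩ -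
    exact ⟨⟨l, fun hi => Nat.pos_of_ne_zero ((mem_F.mp hl).2 _ hi), (mem_F.mp hl).1⟩,
      Finset.mem_univ _, rfl⟩
  · intro c _
    rfl

lemma inner_wt (n a : ℕ) (hn : n ≠ 0) :
    ∑ l ∈ F n, wt (a :: l) = a * Tfun n := by
  rw [Tfun, Finset.mul_sum]
  refine Finset.sum_congr rfl fun l hl => ?_
  have hl' : l ≠ [] := by rintro rfl; exact not_nil_mem_F hn hl
  rw [wt_cons a l hl']

lemma Sfun_rec (n : ℕ) :
    Sfun (n+1) = 1 + ∑ k ∈ Finset.range (n+2), (n+1-k) * Tfun k := by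
  rw [Sfun, F_succ_sum]
  rw [Finset.sum_range_succ'  (fun k => ∑ l ∈ F k, wt ((n+1-k) :: l)) n]
  rw [Finset.sum_range_succ (fun k => (n+1-k) * Tfun k) (n+1)]
  simp only [Nat.sub_self, zero_mul, add_zero]
  rw [Finset.sum_range_succ' (fun k => (n+1-k) * Tfun k) n]
  simp only [Nat.sub_zero, Tfun_zero, mul_zero, add_zero]
  rw [show ∑ x ∈ F 0, wt ((n+1) :: x) = 1 by simp [F]]
  rw [add_comm]
  congr 1
  refine Finset.sum_congr rfl fun k _ => ?_
  exact inner_wt (k+1) (n+1-(k+1)) (Nat.succ_ne_zero k)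

lemma Tfun_rec (n : ℕ) :
    Tfun (n+1) = (n+1) + ∑ k ∈ Finset.range (n+2), (n+1-k)^2 * Tfun k := by
  rw [Tfun, F_succ_sum]
  rw [Finset.sum_range_succ' (fun k => ∑ l ∈ F k, ((n+1-k) :: l).headI * wt ((n+1-k) :: l)) n]
  rw [Finset.sum_range_succ (fun k => (n+1-k)^2 * Tfun k) (n+1)]
  simp only [Nat.sub_self, add_zero, ne_eq, OfNat.ofNat_ne_zero, not_false_eq_true,
    zero_pow, zero_mul]
  rw [Finset.sum_range_succ' (fun k => (n+1-k)^2 * Tfun k) n]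
  simp only [Nat.sub_zero, Tfun_zero, mul_zero, add_zero]
  rw [show ∑ x ∈ F 0, ((n+1) :: x).headI * wt ((n+1) :: x) = n+1 by simp [F]]
  rw [add_comm]
  congr 1
  refine Finset.sum_congr rfl fun k _ => ?_
  simp only [List.headI]
  rw [← Finset.mul_sum, inner_wt (k+1) _ (Nat.succ_ne_zero k), pow_two, mul_assoc]

lemma Tfun_rec' (n : ℕ) :
    Tfun (n+1) = (n+1) + ∑ k ∈ Finset.range (n+2), k^2 * Tfun (n+1-k) := by
  rw [Tfun_rec]
  congr 1
  rw [← Finset.sum_range_reflect (fun k => k^2 * Tfun (n+1-k)) (n+2)]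
  refine Finset.sum_congr rfl fun k hk => ?_
  have hk' : k ≤ n+1 := by
    have := Finset.mem_range.mp hk; omega
  rw [show n+2-1-k = n+1-k from by omega, Nat.sub_sub_self hk']

lemma Sfun_rec' (n : ℕ) :
    Sfun (n+1) = 1 + ∑ k ∈ Finset.range (n+2), k * Tfun (n+1-k) := by
  rw [Sfun_rec]
  congr 1
  rw [← Finset.sum_range_reflect (fun k => k * Tfun (n+1-k)) (n+2)]
  refine Finset.sum_congr rfl fun k hk => ?_
  have hk' : k ≤ n+1 := by
    have := Finset.mem_range.mp hk; omega
  rw [show n+2-1-k = n+1-k from by omega, Nat.sub_sub_self hk']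

noncomputable def A : ℤ⟦X⟧ := PowerSeries.mk fun n => (n : ℤ)
noncomputable def B : ℤ⟦X⟧ := PowerSeries.mk fun n => (n : ℤ)^2
noncomputable def U : ℤ⟦X⟧ := PowerSeries.mk fun n => if n = 0 then 0 else 1
noncomputable def TZ : ℤ⟦X⟧ := PowerSeries.mk fun n => (Tfun n : ℤ)
noncomputable def SZ : ℤ⟦X⟧ := PowerSeries.mk fun n => if n = 0 then 0 else (zigzag n : ℤ)

lemma pAU : A * (1 - X) = U := by
  ext n
  rw [mul_sub, mul_one, map_sub]
  cases n with
  | zero => simp [A, U]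
  | succ n => simp [A, U, coeff_succ_mul_X]

lemma pU : U * (1 - X) = X := by
  ext n
  rw [mul_sub, mul_one, map_sub]
  match n with
  | 0 => simp [U]
  | 1 => simp [U, coeff_succ_mul_X]
  | (n+2) => simp [U, coeff_succ_mul_X, coeff_X]

lemma pB1 : B * (1 - X) = A + A - U := by
  ext n
  rw [mul_sub, mul_one, map_sub, map_sub, map_add]
  cases n with
  | zero => simp [A, B, U]
  | succ n =>
    simp only [coeff_succ_mul_X, B, A, U, coeff_mk, Nat.succ_ne_zero, if_false]
    push_cast
    ring

lemma pA : A * (1 - X)^2 = X := by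
  rw [pow_two, ← mul_assoc, pAU, pU]

lemma pB : B * (1 - X)^3 = X + X^2 := by
  have h : B * (1 - X)^3 = (B * (1-X)) * (1-X)^2 := by ring
  rw [h, pB1]
  have : (A + A - U) * (1 - X)^2 = (A * (1-X)^2) + (A * (1-X)^2) - (U * (1-X)) * (1-X) := by
    ring
  rw [this, pA, pU]
  ring

lemma cT : TZ = A + B * TZ := by
  ext n
  rw [map_add, coeff_mul, Finset.Nat.sum_antidiagonal_eq_sum_range_succ_mk]
  simp only [TZ, A, B, coeff_mk]
  cases n with
  | zero => simp
  | succ n =>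
    rw [Tfun_rec' n]
    push_cast
    ring

lemma cS : SZ = U + A * TZ := by
  ext n
  rw [map_add, coeff_mul, Finset.Nat.sum_antidiagonal_eq_sum_range_succ_mk]
  simp only [SZ, U, A, TZ, coeff_mk]
  cases n with
  | zero => simp
  | succ n =>
    simp only [Nat.succ_ne_zero, if_false]
    rw [zigzag_eq, Sfun_rec' n]
    push_cast
    ring

lemma hT : TZ * (1 - 4*X + 2*X^2 - X^3) = X - X^2 := by
  linear_combination (1-X)^3 * cT + (1-X) * pA + TZ * pB

lemma oneSubX_ne : (1 - X : ℤ⟦X⟧) ≠ 0 := by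
  intro h
  have := congrArg constantCoeff h
  simp at this

end ZigzagAux

/-- `Σ_n zigzag(n) tⁿ = t(1-3t+2t²-t³)/(1-5t+6t²-3t³+t⁴)`. -/
theorem zigzag_gf :
    (PowerSeries.mk fun n => if n = 0 then 0 else (zigzag n : ℤ)) *
      (1 - 5 * X + 6 * X ^ 2 - 3 * X ^ 3 + X ^ 4) =
        X * (1 - 3 * X + 2 * X ^ 2 - X ^ 3) := by
  show ZigzagAux.SZ * _ = _
  refine mul_right_cancel₀ ZigzagAux.oneSubX_ne ?_
  linear_combination ((1-X)^2*(1 - 4*X + 2*X^2 - X^3)) * ZigzagAux.cS +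
    ((1-X)*(1 - 4*X + 2*X^2 - X^3)) * ZigzagAux.pU +
    (ZigzagAux.A*(1-X)^2) * ZigzagAux.hT + (X*(1-X)) * ZigzagAux.pA
end

section
/- Let F: ℕ+ → R[[t]] be defined (for a fixed polynomial p(a,b) and affine-linear L(a) = c_1 a + c_0 with c_1 > 0, c_0 ≥ 0 integers) by F(a) = Σ over compositions starting with a of wt, where wt(a_1,...,a_r) = t^{L(a_1)+...+L(a_r)} ∏_{i=1}^{r-1} p(a_i,a_{i+1}). Then F satisfies the functional equation F(a) = t^{L(a)} + t^{L(a)} Σ_{b=1}^∞ p(a,b) F(b), where the infinite sum converges in the formal power series topology. -/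
open PowerSeries

/-- The coefficientwise (product) topology on `ℤ⟦X⟧`, i.e. the formal power series
topology (with `ℤ` discrete). -/
noncomputable instance : TopologicalSpace (PowerSeries ℤ) :=
  TopologicalSpace.induced (fun f n => (PowerSeries.coeff (R := ℤ) n) f) inferInstance

/-- `temperleyF p c₁ c₀ a` is the power series `F(a)`: the sum, over all compositions
with first part `a`, of `t^{L(a₁)+⋯+L(a_r)} ∏_{i<r} p(aᵢ, aᵢ₊₁)`, where
`L(x) = c₁x + c₀`.  Since `L(x) ≥ x` (for `c₁ ≥ 1`), the coefficient of `tⁿ` is the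
finite sum over compositions of `m ≤ n`. -/
noncomputable def temperleyF (p : MvPolynomial (Fin 2) ℤ) (c₁ c₀ : ℕ) (a : ℕ) :
    PowerSeries ℤ :=
  PowerSeries.mk fun n =>
    ∑ m ∈ Finset.Icc 1 n, ∑ c : Composition m,
      if c.blocks.head? = some a ∧ (c.blocks.map fun x => c₁ * x + c₀).sum = n then
        ((c.blocks.zip c.blocks.tail).map fun q =>
          MvPolynomial.eval ![(q.1 : ℤ), (q.2 : ℤ)] p).prod
      else 0

namespace TemperleyAux

/-- The weight of a list of parts. -/
noncomputable def W (p : MvPolynomial (Fin 2) ℤ) (l : List ℕ) : ℤ :=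
  ((l.zip l.tail).map fun q => MvPolynomial.eval ![(q.1 : ℤ), (q.2 : ℤ)] p).prod

/-- `Ls c₁ c₀ l = Σ L(x)` over the list. -/
def Ls (c₁ c₀ : ℕ) (l : List ℕ) : ℕ := (l.map fun x => c₁ * x + c₀).sum

lemma Ls_cons (c₁ c₀ x : ℕ) (l : List ℕ) :
    Ls c₁ c₀ (x :: l) = (c₁ * x + c₀) + Ls c₁ c₀ l := by simp [Ls]

lemma sum_le_Ls {c₁ : ℕ} (hc₁ : 1 ≤ c₁) (c₀ : ℕ) (l : List ℕ) : l.sum ≤ Ls c₁ c₀ l := by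
  induction l with
  | nil => simp [Ls]
  | cons x t ih =>
    have hx : x ≤ c₁ * x := Nat.le_mul_of_pos_left x hc₁
    simp only [List.sum_cons, Ls_cons]
    omega

lemma coeff_temperleyF (p : MvPolynomial (Fin 2) ℤ) (c₁ c₀ a n : ℕ) :
    (coeff (R := ℤ) n) (temperleyF p c₁ c₀ a) =
      ∑ m ∈ Finset.Icc 1 n, ∑ c : Composition m,
        if c.blocks.head? = some a ∧ Ls c₁ c₀ c.blocks = n then W p c.blocks else 0 := by
  rw [temperleyF, coeff_mk]; rfl

lemma head?_cases {l : List ℕ} {a : ℕ} (h : l.head? = some a) : l = a :: l.tail := by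
  cases l with
  | nil => simp at h
  | cons x t => simp only [List.head?_cons, Option.some.injEq] at h; simp [h]

lemma coeff_eq_zero_of_lt (p : MvPolynomial (Fin 2) ℤ) {c₁ : ℕ} (c₀ : ℕ) (hc₁ : 1 ≤ c₁)
    {b k : ℕ} (h : k < b) : (coeff (R := ℤ) k) (temperleyF p c₁ c₀ b) = 0 := by
  rw [coeff_temperleyF]
  refine Finset.sum_eq_zero fun m _ => Finset.sum_eq_zero fun c _ => ?_
  rw [if_neg]
  rintro ⟨h1, h2⟩
  have hc : c.blocks = b :: c.blocks.tail := head?_cases h1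
  have hmem : b ∈ c.blocks := by rw [hc]; exact List.mem_cons_self
  have hble : b ≤ c.blocks.sum :=
    List.single_le_sum (fun x _ => Nat.zero_le x) _ hmem
  have := sum_le_Ls hc₁ c₀ c.blocks
  omega

lemma sigma_ext {m m' : ℕ} {c : Composition m} {d : Composition m'}
    (h : c.blocks = d.blocks) : (⟨m, c⟩ : Σ k, Composition k) = ⟨m', d⟩ := by
  obtain ⟨l, hp, hs⟩ := c
  obtain ⟨l', hp', hs'⟩ := d
  dsimp only at h
  subst h; subst hs; subst hs'
  rfl

/-- The key recurrence for the coefficients of `temperleyF`. -/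
lemma key (p : MvPolynomial (Fin 2) ℤ) {c₁ : ℕ} (c₀ : ℕ) (hc₁ : 1 ≤ c₁)
    {a : ℕ} (ha : 1 ≤ a) (n : ℕ) :
    (coeff (R := ℤ) n) (temperleyF p c₁ c₀ a) =
      (if n = c₁ * a + c₀ then 1 else 0) +
        ∑ b ∈ Finset.Icc 1 (n - (c₁ * a + c₀)),
          MvPolynomial.eval ![(a : ℤ), (b : ℤ)] p *
            (coeff (R := ℤ) (n - (c₁ * a + c₀))) (temperleyF p c₁ c₀ b) := by
  classical
  set La := c₁ * a + c₀ with hLadef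
  have haLa : a ≤ La := by
    have : a ≤ c₁ * a := Nat.le_mul_of_pos_left a hc₁
    omega
  set k := n - La with hkdef
  rw [coeff_temperleyF, Finset.sum_sigma']
  set T : Finset (Σ m, Composition m) := (Finset.Icc 1 n).sigma fun _ => Finset.univ with hT
  have hsum1 :
      (∑ x ∈ T, if x.2.blocks.head? = some a ∧ Ls c₁ c₀ x.2.blocks = n
        then W p x.2.blocks else 0) =
      ∑ x ∈ T.filter
          (fun x => x.2.blocks.head? = some a ∧ Ls c₁ c₀ x.2.blocks = n), W p x.2.blocks := by
    rw [Finset.sum_filter]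
  rw [hsum1]
  rw [← Finset.sum_filter_add_sum_filter_not
    (T.filter (fun x => x.2.blocks.head? = some a ∧ Ls c₁ c₀ x.2.blocks = n))
    (fun x => x.2.blocks.tail = []) (fun x => W p x.2.blocks)]
  congr 1
  · -- singleton part
    by_cases hn : n = La
    · rw [if_pos hn]
      have han : a ∈ Finset.Icc 1 n := by
        rw [Finset.mem_Icc]; omega
      have hx₀mem : (⟨a, Composition.single a ha⟩ : Σ m, Composition m) ∈
          ((T.filter (fun x => x.2.blocks.head? = some a ∧
            Ls c₁ c₀ x.2.blocks = n)).filter (fun x => x.2.blocks.tail = [])) := by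
        refine Finset.mem_filter.mpr ⟨Finset.mem_filter.mpr ⟨?_, ?_, ?_⟩, ?_⟩
        · exact Finset.mem_sigma.mpr ⟨han, Finset.mem_univ _⟩
        · simp [Composition.single_blocks]
        · rw [Composition.single_blocks]
          simp only [Ls, List.map_cons, List.map_nil, List.sum_cons, List.sum_nil]
          omega
        · simp [Composition.single_blocks]
      have hset : ((T.filter (fun x => x.2.blocks.head? = some a ∧
            Ls c₁ c₀ x.2.blocks = n)).filter (fun x => x.2.blocks.tail = [])) =
          {⟨a, Composition.single a ha⟩} := by
        refine Finset.eq_singleton_iff_unique_mem.mpr ⟨hx₀mem, ?_⟩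
        rintro ⟨m, c⟩ hx
        simp only [Finset.mem_filter] at hx
        obtain ⟨⟨_, hhead, _⟩, htail⟩ := hx
        have hbl : c.blocks = [a] := by
          have := head?_cases hhead
          rw [htail] at this
          exact this
        exact sigma_ext (by rw [hbl, Composition.single_blocks])
      rw [hset, Finset.sum_singleton]
      simp [W, Composition.single_blocks]
    · rw [if_neg hn]
      refine Finset.sum_eq_zero ?_
      rintro ⟨m, c⟩ hx
      exfalso
      simp only [Finset.mem_filter] at hx
      obtain ⟨⟨_, hhead, hLs⟩, htail⟩ := hx
      have hbl : c.blocks = [a] := by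
        have := head?_cases hhead
        rw [htail] at this
        exact this
      rw [hbl] at hLs
      simp only [Ls, List.map_cons, List.map_nil, List.sum_cons, List.sum_nil,
        add_zero] at hLs
      exact hn hLs.symm
  · -- recursive part
    set T' : Finset (Σ m, Composition m) := (Finset.Icc 1 k).sigma fun _ => Finset.univ
      with hT'
    have hrhs : (∑ b ∈ Finset.Icc 1 k,
        MvPolynomial.eval ![(a : ℤ), (b : ℤ)] p *
          (coeff (R := ℤ) k) (temperleyF p c₁ c₀ b)) =
        ∑ y ∈ T'.filter (fun y => Ls c₁ c₀ y.2.blocks = k),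
          MvPolynomial.eval ![(a : ℤ), ((y.2.blocks.headI : ℕ) : ℤ)] p * W p y.2.blocks := by
      have h1 : ∀ b ∈ Finset.Icc 1 k,
          MvPolynomial.eval ![(a : ℤ), (b : ℤ)] p * (coeff (R := ℤ) k) (temperleyF p c₁ c₀ b) =
          ∑ y ∈ T', (if y.2.blocks.head? = some b ∧ Ls c₁ c₀ y.2.blocks = k then
            MvPolynomial.eval ![(a : ℤ), (b : ℤ)] p * W p y.2.blocks else 0) := by
        intro b _
        rw [coeff_temperleyF, Finset.sum_sigma', Finset.mul_sum]
        refine Finset.sum_congr rfl fun y _ => ?_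
        split_ifs <;> simp
      rw [Finset.sum_congr rfl h1, Finset.sum_comm]
      rw [Finset.sum_filter]
      refine Finset.sum_congr rfl fun y hy => ?_
      simp only [hT', Finset.mem_sigma, Finset.mem_Icc, Finset.mem_univ, and_true] at hy
      have hne : y.2.blocks ≠ [] := by
        intro h0
        have := y.2.blocks_sum
        rw [h0] at this
        simp at this
        omega
      have hh : y.2.blocks.head? = some y.2.blocks.headI := by
        cases hl : y.2.blocks with
        | nil => exact absurd hl hne
        | cons x t => simp
      by_cases hLs : Ls c₁ c₀ y.2.blocks = k
      · rw [if_pos hLs]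
        rw [Finset.sum_eq_single y.2.blocks.headI]
        · rw [if_pos ⟨hh, hLs⟩]
        · intro b _ hb
          rw [if_neg]
          rintro ⟨h1', _⟩
          rw [hh] at h1'
          exact hb (Option.some_injective _ h1').symm
        · intro hmem
          exfalso
          apply hmem
          rw [Finset.mem_Icc]
          have hmemb : y.2.blocks.headI ∈ y.2.blocks := by
            rw [head?_cases hh]; exact List.mem_cons_self
          have h1' : 0 < y.2.blocks.headI := y.2.blocks_pos hmemb
          have h2' : y.2.blocks.headI ≤ y.2.blocks.sum :=
            List.single_le_sum (fun x _ => Nat.zero_le x) _ hmemb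
          rw [y.2.blocks_sum] at h2'
          omega
      · rw [if_neg hLs]
        refine Finset.sum_eq_zero fun b _ => ?_
        rw [if_neg]
        rintro ⟨_, h2'⟩
        exact hLs h2'
    rw [hrhs]
    refine Finset.sum_bij'
      (i := fun x hx => (⟨x.2.blocks.tail.sum,
        ⟨x.2.blocks.tail, fun hm => x.2.blocks_pos (List.mem_of_mem_tail hm), rfl⟩⟩ :
          Σ m, Composition m))
      (j := fun y hy => (⟨(a :: y.2.blocks).sum,
        ⟨a :: y.2.blocks, ?_, rfl⟩⟩ : Σ m, Composition m))
      ?_ ?_ ?_ ?_ ?_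
    · -- positivity for j
      intro i hi
      rcases List.mem_cons.mp hi with rfl | h
      · omega
      · exact y.2.blocks_pos h
    · -- hi : i maps into target
      rintro ⟨m, c⟩ hx
      simp only [Finset.mem_filter, hT, Finset.mem_sigma, Finset.mem_Icc, Finset.mem_univ,
        and_true] at hx
      obtain ⟨⟨hm, hhead, hLs⟩, htail⟩ := hx
      have hc : c.blocks = a :: c.blocks.tail := head?_cases hhead
      have hLs' : Ls c₁ c₀ c.blocks = (c₁ * a + c₀) + Ls c₁ c₀ c.blocks.tail := by
        conv_lhs => rw [hc]
        rw [Ls_cons]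
      have hLtail : Ls c₁ c₀ c.blocks.tail = k := by omega
      have hpos : 0 < c.blocks.tail.sum :=
        List.sum_pos _ (fun x hxm => c.blocks_pos (List.mem_of_mem_tail hxm)) htail
      have hle : c.blocks.tail.sum ≤ k := by
        have := sum_le_Ls hc₁ c₀ c.blocks.tail
        omega
      simp only [Finset.mem_filter, hT', Finset.mem_sigma, Finset.mem_Icc, Finset.mem_univ,
        and_true]
      exact ⟨⟨by omega, hle⟩, hLtail⟩
    · -- hj : j maps into source
      rintro ⟨m', d⟩ hy
      simp only [Finset.mem_filter, hT', Finset.mem_sigma, Finset.mem_Icc, Finset.mem_univ,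
        and_true] at hy
      obtain ⟨⟨hm1, hm2⟩, hLs⟩ := hy
      have hdsum : d.blocks.sum = m' := d.blocks_sum
      have hdne : d.blocks ≠ [] := by
        intro h0; rw [h0] at hdsum; simp at hdsum; omega
      have hkpos : 1 ≤ k := le_trans hm1 hm2
      have hLan : La ≤ n := by omega
      simp only [Finset.mem_filter, hT, Finset.mem_sigma, Finset.mem_Icc, Finset.mem_univ,
        and_true]
      refine ⟨⟨⟨?_, ?_⟩, ?_, ?_⟩, ?_⟩
      · simp [List.sum_cons]; omega
      · simp only [List.sum_cons, hdsum]
        omega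
      · simp
      · show Ls c₁ c₀ (a :: d.blocks) = n
        rw [Ls_cons, hLs]
        omega
      · simpa using hdne
    · -- left inverse
      rintro ⟨m, c⟩ hx
      simp only [Finset.mem_filter, hT, Finset.mem_sigma, Finset.mem_Icc, Finset.mem_univ,
        and_true] at hx
      obtain ⟨⟨hm, hhead, hLs⟩, htail⟩ := hx
      exact sigma_ext (head?_cases hhead).symm
    · -- right inverse
      rintro ⟨m', d⟩ hy
      exact sigma_ext rfl
    · -- values agree
      rintro ⟨m, c⟩ hx
      simp only [Finset.mem_filter, hT, Finset.mem_sigma, Finset.mem_Icc, Finset.mem_univ,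
        and_true] at hx
      obtain ⟨⟨hm, hhead, hLs⟩, htail⟩ := hx
      have hc : c.blocks = a :: c.blocks.tail := head?_cases hhead
      obtain ⟨b, t', ht⟩ : ∃ b t', c.blocks.tail = b :: t' := by
        cases h : c.blocks.tail with
        | nil => exact absurd h htail
        | cons b t' => exact ⟨b, t', rfl⟩
      have hc2 : c.blocks = a :: b :: t' := by rw [hc, ht]
      simp only [ht, hc2, W, List.tail_cons, List.zip_cons_cons, List.map_cons,
        List.prod_cons, List.headI]

end TemperleyAux

open TemperleyAux in
/-- Temperley's functional equation
`F(a) = t^{L(a)} + t^{L(a)} Σ_{b≥1} p(a,b) F(b)`,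
the infinite sum converging (being summable) in the formal power series topology. -/
theorem temperley_functional_equation (p : MvPolynomial (Fin 2) ℤ) (c₁ c₀ : ℕ)
    (hc₁ : 1 ≤ c₁) (a : ℕ) (ha : 1 ≤ a) :
    Summable (fun b : ℕ+ =>
        (PowerSeries.C (R := ℤ) (MvPolynomial.eval ![(a : ℤ), ((b : ℕ) : ℤ)] p)) *
          temperleyF p c₁ c₀ b) ∧
    temperleyF p c₁ c₀ a =
      X ^ (c₁ * a + c₀) +
        X ^ (c₁ * a + c₀) *
          ∑' b : ℕ+,
            (PowerSeries.C (R := ℤ) (MvPolynomial.eval ![(a : ℤ), ((b : ℕ) : ℤ)] p)) *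
              temperleyF p c₁ c₀ b := by
  classical
  haveI : T2Space (PowerSeries ℤ) :=
    Topology.IsEmbedding.t2Space
      (f := fun (f : PowerSeries ℤ) (n : ℕ) => (PowerSeries.coeff (R := ℤ) n) f)
      ⟨⟨rfl⟩, fun φ ψ h => PowerSeries.ext fun n => congrFun h n⟩
  set La := c₁ * a + c₀ with hLadef
  set e : ℕ → ℤ := fun b => MvPolynomial.eval ![(a : ℤ), (b : ℤ)] p with he
  set f : ℕ+ → PowerSeries ℤ := fun b =>
    (PowerSeries.C (R := ℤ) (e (b : ℕ))) * temperleyF p c₁ c₀ (b : ℕ) with hf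
  set T : PowerSeries ℤ := PowerSeries.mk fun k =>
    ∑ b ∈ Finset.Icc 1 k, e b * (coeff (R := ℤ) k) (temperleyF p c₁ c₀ b) with hTdef
  -- the canonical finite set of possibly-contributing indices
  have s₀mem : ∀ (k : ℕ) (b : ℕ+),
      b ∈ ((Finset.Icc 1 k).attach.image fun x =>
        (⟨x.1, lt_of_lt_of_le one_pos (Finset.mem_Icc.mp x.2).1⟩ : ℕ+)) ↔ (b : ℕ) ≤ k := by
    intro k b
    constructor
    · intro hb
      obtain ⟨x, hx, hxb⟩ := Finset.mem_image.mp hb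
      have hbx : (b : ℕ) = x.1 := by subst hxb; rfl
      rw [hbx]
      exact (Finset.mem_Icc.mp x.2).2
    · intro hb
      refine Finset.mem_image.mpr ⟨⟨(b : ℕ), ?_⟩, Finset.mem_attach _ _, rfl⟩
      rw [Finset.mem_Icc]
      exact ⟨b.pos, hb⟩
  have hHas : HasSum f T := by
    rw [HasSum, nhds_induced, Filter.tendsto_comap_iff, tendsto_pi_nhds]
    intro k
    refine Filter.Tendsto.congr' ?_ tendsto_const_nhds
    rw [Filter.eventuallyEq_iff_exists_mem]
    refine ⟨{s | ((Finset.Icc 1 k).attach.image fun x =>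
        (⟨x.1, lt_of_lt_of_le one_pos (Finset.mem_Icc.mp x.2).1⟩ : ℕ+)) ⊆ s},
      by rw [SummationFilter.unconditional_filter]; exact Filter.mem_atTop _, ?_⟩
    intro s hs
    simp only [Function.comp_apply, Set.mem_setOf_eq] at hs ⊢
    have h1 : (coeff (R := ℤ) k) (∑ b ∈ s, f b) = ∑ b ∈ s, e (b : ℕ) *
        (coeff (R := ℤ) k) (temperleyF p c₁ c₀ (b : ℕ)) := by
      rw [map_sum]
      exact Finset.sum_congr rfl fun b _ => coeff_C_mul _ _ _
    have h2 : (∑ b ∈ s, e (b : ℕ) * (coeff (R := ℤ) k) (temperleyF p c₁ c₀ (b : ℕ))) =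
        ∑ b ∈ ((Finset.Icc 1 k).attach.image fun x =>
          (⟨x.1, lt_of_lt_of_le one_pos (Finset.mem_Icc.mp x.2).1⟩ : ℕ+)),
          e (b : ℕ) * (coeff (R := ℤ) k) (temperleyF p c₁ c₀ (b : ℕ)) := by
      refine (Finset.sum_subset hs fun b _ hb => ?_).symm
      have hlt : k < (b : ℕ) := lt_of_not_ge fun hle => hb ((s₀mem k b).mpr hle)
      exact mul_eq_zero_of_right _ (coeff_eq_zero_of_lt p c₀ hc₁ hlt)
    have h3 : (∑ b ∈ ((Finset.Icc 1 k).attach.image fun x =>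
          (⟨x.1, lt_of_lt_of_le one_pos (Finset.mem_Icc.mp x.2).1⟩ : ℕ+)),
          e (b : ℕ) * (coeff (R := ℤ) k) (temperleyF p c₁ c₀ (b : ℕ))) =
        ∑ b ∈ Finset.Icc 1 k, e b * (coeff (R := ℤ) k) (temperleyF p c₁ c₀ b) := by
      rw [Finset.sum_image]
      · exact Finset.sum_attach (Finset.Icc 1 k)
          (fun b => e b * (coeff (R := ℤ) k) (temperleyF p c₁ c₀ b))
      · intro x _ y _ hxy
        exact Subtype.ext (congrArg PNat.val hxy)
    rw [hTdef, coeff_mk, h1, h2, h3]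
  refine ⟨hHas.summable, ?_⟩
  rw [hHas.tsum_eq]
  ext n
  rw [key p c₀ hc₁ ha n, map_add, coeff_X_pow]
  congr 1
  by_cases hn : La ≤ n
  · conv_rhs => rw [show n = (n - La) + La from by omega]
    rw [coeff_X_pow_mul, hTdef, coeff_mk]
  · have hk0 : n - La = 0 := by omega
    rw [hk0]
    simp only [Finset.Icc_eq_empty_of_lt (by norm_num : (0:ℕ) < 1), Finset.sum_empty]
    rw [PowerSeries.coeff_mul]
    refine (Finset.sum_eq_zero fun q hq => ?_).symm
    rw [Finset.HasAntidiagonal.mem_antidiagonal] at hq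
    rw [coeff_X_pow, if_neg (by omega), zero_mul]
end

section
/- For the weight wt(a_1,...,a_r) = t^{a_1+...+a_r} ∏_{i=1}^{r-1}(a_i+a_{i+1}-1), the two-variable generating function Φ(z,t) = Σ_{a≥1} F(a) z^a (where F(a) is the sum of weights of compositions starting with a) satisfies Φ(z,t) = h(z,t) + g_0(z,t)Φ(1,t) + g_1(z,t)·(z∂_z Φ)(1,t), where h(z,t) = zt/(1-zt), g_0(z,t) = Σ_{a≥1}(a-1)t^a z^a, g_1(z,t) = Σ_{a≥1} t^a z^a. -/
open PowerSeries

/-- weight product of a list -/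
def W (l : List ℕ) : ℤ := ((l.zip l.tail).map fun q => ((q.1 : ℤ) + q.2 - 1)).prod

/-- coefficient-level sum -/
noncomputable def G (n a : ℕ) : ℤ :=
  ∑ c : Composition n, if c.blocks.head? = some a then W c.blocks else 0

/-- `F a` = sum over compositions with first part `a` of
`t^{a₁+⋯+a_r} ∏_{i<r}(aᵢ+aᵢ₊₁-1)`, as a power series in `t`. -/
noncomputable def Ftem (a : ℕ) : PowerSeries ℤ :=
  PowerSeries.mk fun n =>
    ∑ c : Composition n,
      if c.blocks.head? = some a then
        ((c.blocks.zip c.blocks.tail).map fun q => ((q.1 : ℤ) + q.2 - 1)).prod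
      else 0

lemma Ftem_eq (a : ℕ) : Ftem a = PowerSeries.mk fun n => G n a := rfl

lemma coeff_Ftem (a n : ℕ) : coeff n (Ftem a) = G n a := by
  rw [Ftem_eq, coeff_mk]

lemma head_le_of_head? {n : ℕ} (c : Composition n) {a : ℕ}
    (h : c.blocks.head? = some a) : a ∈ c.blocks := by
  cases hb : c.blocks with
  | nil => simp [hb] at h
  | cons x l => rw [hb] at h; simp at h; simp [h.symm]

lemma G_zero (n : ℕ) : G n 0 = 0 := by
  apply Finset.sum_eq_zero
  intro c _
  rw [if_neg]
  intro h
  exact absurd (c.blocks_pos (head_le_of_head? c h)) (lt_irrefl 0)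

lemma G_of_lt {n a : ℕ} (h : n < a) : G n a = 0 := by
  apply Finset.sum_eq_zero
  intro c _
  rw [if_neg]
  intro hh
  have := List.single_le_sum (fun x hx => Nat.zero_le x) a (head_le_of_head? c hh)
  rw [c.blocks_sum] at this
  omega

-- embedding infrastructure
noncomputable def cf : PowerSeries ℤ →+ (ℕ → ℤ) where
  toFun f n := coeff n f
  map_zero' := by ext n; simp
  map_add' f g := by ext n; simp

lemma cf_inducing : Topology.IsInducing (cf : PowerSeries ℤ → ℕ → ℤ) := ⟨rfl⟩

lemma cf_injective : Function.Injective (cf : PowerSeries ℤ → ℕ → ℤ) := by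
  intro f g h
  ext n
  exact congrFun h n

instance : T2Space (PowerSeries ℤ) :=
  ((Topology.IsEmbedding.mk cf_inducing cf_injective)).t2Space

lemma hasSum_coeff_iff {ι : Type*} {f : ι → PowerSeries ℤ} {S : PowerSeries ℤ} :
    HasSum f S ↔ ∀ n, HasSum (fun i => coeff n (f i)) (coeff n S) := by
  rw [HasSum, cf_inducing.tendsto_nhds_iff]
  have : ((cf : PowerSeries ℤ → ℕ → ℤ) ∘ fun s : Finset ι => ∑ i ∈ s, f i) =
      fun s : Finset ι => ∑ i ∈ s, (cf (f i)) := by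
    funext s; exact map_sum cf f s
  rw [this, ← HasSum, Pi.hasSum]
  rfl

lemma W_cons (a : ℕ) (l : List ℕ) :
    W (a :: l) = (if l = [] then 1 else ((a : ℤ) + l.headI - 1) * W l) := by
  cases l with
  | nil => simp [W]
  | cons b t => simp [W]

lemma comp_zero_blocks {c : Composition 0} : c.blocks = [] := by
  cases h : c.blocks with
  | nil => rfl
  | cons x l =>
    have hx : 0 < x := c.blocks_pos (by simp [h])
    have := c.blocks_sum
    rw [h] at this
    simp at this
    omega

lemma sum_empty_ind (m : ℕ) :
    (∑ c : Composition m, if c.blocks = [] then (1 : ℤ) else 0) = if m = 0 then 1 else 0 := by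
  rcases Nat.eq_zero_or_pos m with hm | hm
  · subst hm
    rw [if_pos rfl]
    have hu : ∀ c : Composition 0, c = ⟨[], by simp, rfl⟩ := by
      intro c; ext1; rw [comp_zero_blocks]
    rw [Finset.sum_eq_single (⟨[], by simp, rfl⟩ : Composition 0)]
    · simp
    · intro c _ hc; exact absurd (hu c) hc
    · intro h; exact absurd (Finset.mem_univ _) h
  · rw [if_neg (by omega)]
    apply Finset.sum_eq_zero
    intro c _
    rw [if_neg]
    intro h
    have := c.blocks_sum
    rw [h] at this
    simp at this
    omega

lemma inner_sum_G (m : ℕ) (c : Composition m) (a : ℕ) :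
    (if c.blocks = [] then 0 else ((a : ℤ) + c.blocks.headI - 1) * W c.blocks)
      = ∑ b ∈ Finset.range (m + 1),
          if c.blocks.head? = some b then ((a : ℤ) + b - 1) * W c.blocks else 0 := by
  cases h : c.blocks with
  | nil => simp [h]
  | cons x l =>
    have hx : x ≤ m := by
      have := List.single_le_sum (fun y _ => Nat.zero_le y) x (by simp [h] : x ∈ c.blocks)
      rw [c.blocks_sum] at this; exact this
    simp only [h, List.head?_cons, List.headI, if_neg (List.cons_ne_nil x l),
      Option.some.injEq]
    rw [Finset.sum_ite_eq (Finset.range (m + 1)) x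
      (fun b => ((a : ℤ) + b - 1) * W (x :: l))]
    rw [if_pos (Finset.mem_range.mpr (by omega))]

def tailComp {n : ℕ} (a : ℕ) (c : Composition n) (h : c.blocks.head? = some a) :
    Composition (n - a) :=
  ⟨c.blocks.tail, fun hi => c.blocks_pos (List.mem_of_mem_tail hi), by
    have hcons : a :: c.blocks.tail = c.blocks := List.cons_head?_tail h
    have hsum : (a :: c.blocks.tail).sum = n := by rw [hcons]; exact c.blocks_sum
    simp at hsum
    omega⟩

def consComp {m : ℕ} (a n : ℕ) (ha : 0 < a) (h : a + m = n) (c : Composition m) :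
    Composition n :=
  ⟨a :: c.blocks, fun hi => by
      rcases List.mem_cons.mp hi with h | h
      · omega
      · exact c.blocks_pos h,
    by simp [c.blocks_sum]; omega⟩

lemma G_as_sum (a n : ℕ) (ha : 1 ≤ a) (han : a ≤ n) :
    G n a = ∑ c : Composition (n - a), W (a :: c.blocks) := by
  rw [G, ← Finset.sum_filter]
  refine Finset.sum_bij'
    (i := fun c hc => tailComp a c (Finset.mem_filter.mp hc).2)
    (j := fun c _ => consComp a n ha (by omega) c)
    (fun c hc => Finset.mem_univ _) ?_ ?_ ?_ ?_
  · intro c hc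
    simp only [Finset.mem_filter, Finset.mem_univ, true_and]
    rfl
  · intro c hc
    have hc' : c.blocks.head? = some a := (Finset.mem_filter.mp hc).2
    ext1
    simp [consComp, tailComp, List.cons_head?_tail hc']
  · intro c hc
    ext1
    simp [consComp, tailComp]
  · intro c hc
    have hc' : c.blocks.head? = some a := (Finset.mem_filter.mp hc).2
    show W c.blocks = W (a :: (tailComp a c hc').blocks)
    rw [show (tailComp a c hc').blocks = c.blocks.tail from rfl,
      List.cons_head?_tail hc']
lemma G_rec (a n : ℕ) (ha : 1 ≤ a) (han : a ≤ n) :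
    G n a = (if n = a then 1 else 0)
      + ∑ b ∈ Finset.range (n - a + 1), ((a : ℤ) + b - 1) * G (n - a) b := by
  rw [G_as_sum a n ha han]
  have : ∀ c : Composition (n - a), W (a :: c.blocks)
      = (if c.blocks = [] then (1 : ℤ) else 0)
        + ∑ b ∈ Finset.range ((n - a) + 1),
            (if c.blocks.head? = some b then ((a : ℤ) + b - 1) * W c.blocks else 0) := by
    intro c
    rw [W_cons, ← inner_sum_G]
    split <;> simp
  rw [Finset.sum_congr rfl fun c _ => this c, Finset.sum_add_distrib, sum_empty_ind,
    Finset.sum_comm]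
  congr 1
  · split <;> split <;> first | rfl | omega
  · refine Finset.sum_congr rfl fun b _ => ?_
    rw [G, Finset.mul_sum]
    refine Finset.sum_congr rfl fun c _ => ?_
    rw [mul_ite, mul_zero]

lemma hasSum_Ftem :
    HasSum (fun b : ℕ+ => Ftem (b : ℕ))
      (PowerSeries.mk fun n => ∑ b ∈ Finset.range (n + 1), G n b) := by
  rw [hasSum_coeff_iff]
  intro n
  simp only [coeff_Ftem, coeff_mk]
  have h0 : ∀ x ∉ Set.range ((↑) : ℕ+ → ℕ), G n x = 0 := by
    intro x hx
    have : x = 0 := by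
      by_contra h
      exact hx ⟨⟨x, Nat.pos_of_ne_zero h⟩, rfl⟩
    rw [this, G_zero]
  have h1 : HasSum (fun b : ℕ => G n b) (∑ b ∈ Finset.range (n + 1), G n b) :=
    hasSum_sum_of_ne_finset_zero (fun b hb => G_of_lt (by simpa using hb))
  exact (Function.Injective.hasSum_iff PNat.coe_injective h0).mpr h1

lemma hasSum_Ftem' :
    HasSum (fun b : ℕ+ => ((b : ℕ) : PowerSeries ℤ) * Ftem (b : ℕ))
      (PowerSeries.mk fun n => ∑ b ∈ Finset.range (n + 1), (b : ℤ) * G n b) := by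
  rw [hasSum_coeff_iff]
  intro n
  have hc : ∀ b : ℕ, coeff n (((b : ℕ) : PowerSeries ℤ) * Ftem b) = (b : ℤ) * G n b := by
    intro b
    rw [show ((b : ℕ) : PowerSeries ℤ) = C ((b : ℕ) : ℤ) from by
      rw [← map_natCast (C (R := ℤ)) b], coeff_C_mul, coeff_Ftem]
  simp only [hc, coeff_mk]
  have h0 : ∀ x ∉ Set.range ((↑) : ℕ+ → ℕ), (x : ℤ) * G n x = 0 := by
    intro x hx
    have : x = 0 := by
      by_contra h
      exact hx ⟨⟨x, Nat.pos_of_ne_zero h⟩, rfl⟩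
    rw [this]; simp
  have h1 : HasSum (fun b : ℕ => (b : ℤ) * G n b)
      (∑ b ∈ Finset.range (n + 1), (b : ℤ) * G n b) :=
    hasSum_sum_of_ne_finset_zero (fun b hb => by rw [G_of_lt (by simpa using hb), mul_zero])
  exact (Function.Injective.hasSum_iff PNat.coe_injective h0).mpr h1

/-- `Φ(z,t) = Σ_{a≥1} F(a) zᵃ`, a power series in `z` with coefficients in `ℤ⟦t⟧`. -/
noncomputable def Phi : PowerSeries (PowerSeries ℤ) := PowerSeries.mk fun a => Ftem a

/-- `h(z,t) = Σ_{a≥1} tᵃ zᵃ = zt/(1-zt)`. -/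
noncomputable def hser : PowerSeries (PowerSeries ℤ) :=
  PowerSeries.mk fun a => if a = 0 then 0 else X ^ a

/-- `g₀(z,t) = Σ_{a≥1} (a-1) tᵃ zᵃ`. -/
noncomputable def g0 : PowerSeries (PowerSeries ℤ) :=
  PowerSeries.mk fun a => if a = 0 then 0 else PowerSeries.C (R := ℤ) ((a : ℤ) - 1) * X ^ a

/-- `g₁(z,t) = Σ_{a≥1} tᵃ zᵃ`. -/
noncomputable def g1 : PowerSeries (PowerSeries ℤ) :=
  PowerSeries.mk fun a => if a = 0 then 0 else X ^ a

lemma Ftem_zero : Ftem 0 = 0 :=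
  PowerSeries.ext fun n => by rw [coeff_Ftem, G_zero]; simp

/-- Temperley's functional equation for the two-variable generating function:
`Φ(z,t) = h(z,t) + g₀(z,t)·Φ(1,t) + g₁(z,t)·(z∂_zΦ)(1,t)`,
where `Φ(1,t) = Σ_{a≥1} F(a)` and `(z∂_zΦ)(1,t) = Σ_{a≥1} a·F(a)`. -/
theorem phi_functional_equation :
    Phi = hser + g0 * PowerSeries.C (R := PowerSeries ℤ) (∑' a : ℕ+, Ftem a) +
      g1 * PowerSeries.C (R := PowerSeries ℤ) (∑' a : ℕ+, ((a : ℕ) : PowerSeries ℤ) * Ftem a) := by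
  have hS0 : (∑' a : ℕ+, Ftem (a : ℕ))
      = PowerSeries.mk fun n => ∑ b ∈ Finset.range (n + 1), G n b := hasSum_Ftem.tsum_eq
  have hS1 : (∑' a : ℕ+, ((a : ℕ) : PowerSeries ℤ) * Ftem (a : ℕ))
      = PowerSeries.mk fun n => ∑ b ∈ Finset.range (n + 1), (b : ℤ) * G n b :=
    hasSum_Ftem'.tsum_eq
  rw [hS0, hS1]
  refine PowerSeries.ext fun k => ?_
  rw [map_add, map_add, coeff_mul_C, coeff_mul_C]
  simp only [Phi, hser, g0, g1, coeff_mk]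
  rcases Nat.eq_zero_or_pos k with hk | hk
  · subst hk
    simp [Ftem_zero]
  · rw [if_neg (by omega), if_neg (by omega)]
    refine PowerSeries.ext fun n => ?_
    rw [coeff_Ftem, map_add, map_add, coeff_X_pow, mul_assoc, coeff_C_mul,
      coeff_X_pow_mul', coeff_X_pow_mul', coeff_mk, coeff_mk]
    by_cases hkn : k ≤ n
    · rw [if_pos hkn, if_pos hkn, G_rec k n hk hkn, Finset.mul_sum,
        add_assoc, ← Finset.sum_add_distrib]
      congr 1
      refine Finset.sum_congr rfl fun b _ => by ring
    · rw [if_neg hkn, if_neg hkn, G_of_lt (by omega), if_neg (by omega)]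
      simp
end

section
/- For any integer polynomial p(a,b) and affine-linear L(a)=c_1 a + c_0 (c_1 ≥ 1, c_0 ≥ 0), the generating function f(t) = Σ over all compositions C of t^{Σ L(a_i)} ∏_{i<r} p(a_i,a_{i+1}) is a rational function of t. -/
open PowerSeries

namespace Temperley

open Finset


/-- weight of a list: product of p over consecutive pairs -/
noncomputable def Wt (p : MvPolynomial (Fin 2) ℤ) (l : List ℕ) : ℤ :=
  ((l.zip l.tail).map fun q => MvPolynomial.eval ![(q.1 : ℤ), (q.2 : ℤ)] p).prod

@[simp] lemma Wt_singleton (p : MvPolynomial (Fin 2) ℤ) (a : ℕ) : Wt p [a] = 1 := by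
  simp [Wt]

lemma Wt_cons (p : MvPolynomial (Fin 2) ℤ) (a : ℕ) {l : List ℕ} (hl : l ≠ []) :
    Wt p (a :: l) = MvPolynomial.eval ![(a : ℤ), (l.headI : ℤ)] p * Wt p l := by
  cases l with
  | nil => exact absurd rfl hl
  | cons b l' => simp [Wt, List.zip]

/-- all nonempty lists of positive integers with sum in [1,N] -/
noncomputable def comps (N : ℕ) : Finset (List ℕ) :=
  (Finset.Icc 1 N).biUnion fun m =>
    (Finset.univ : Finset (Composition m)).image Composition.blocks

lemma mem_comps {N : ℕ} {l : List ℕ} :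
    l ∈ comps N ↔ 1 ≤ l.sum ∧ l.sum ≤ N ∧ ∀ x ∈ l, 0 < x := by
  simp only [comps, Finset.mem_biUnion, Finset.mem_image, Finset.mem_univ, true_and,
    Finset.mem_Icc]
  constructor
  · rintro ⟨m, ⟨hm1, hm2⟩, c, rfl⟩
    rw [c.blocks_sum]
    exact ⟨hm1, hm2, fun x hx => c.blocks_pos hx⟩
  · rintro ⟨h1, h2, h3⟩
    exact ⟨l.sum, ⟨h1, h2⟩, ⟨l, @fun x hx => h3 x hx, rfl⟩, rfl⟩

lemma sum_comps (N : ℕ) (H : List ℕ → ℤ) :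
    ∑ m ∈ Finset.Icc 1 N, ∑ c : Composition m, H c.blocks = ∑ l ∈ comps N, H l := by
  rw [comps, Finset.sum_biUnion]
  · refine Finset.sum_congr rfl fun m _ => ?_
    rw [Finset.sum_image]
    intro a _ b _ h
    exact Composition.ext h
  · intro m hm m' hm' hne
    simp only [Function.onFun]
    rw [Finset.disjoint_left]
    rintro l hl hl'
    simp only [Finset.mem_image, Finset.mem_univ, true_and] at hl hl'
    obtain ⟨c, rfl⟩ := hl
    obtain ⟨c', hc'⟩ := hl'
    apply hne
    rw [← c.blocks_sum, ← hc', c'.blocks_sum]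

lemma comps_nonempty_mem {N : ℕ} {l : List ℕ} (h : l ∈ comps N) : l ≠ [] := by
  rcases mem_comps.mp h with ⟨h1, -, -⟩
  intro hl; rw [hl] at h1; simp at h1

/-- splitting: sum over comps N = singletons + cons decomposition -/
lemma splitSum (N : ℕ) (H : List ℕ → ℤ) :
    ∑ l ∈ comps N, H l =
      (∑ a ∈ Finset.Icc 1 N, H [a]) +
      ∑ a ∈ Finset.Icc 1 N, ∑ l ∈ comps (N - a), H (a :: l) := by
  have key : ∑ l ∈ (comps N).filter (fun l => l.length = 1), H l
      = ∑ a ∈ Finset.Icc 1 N, H [a] := by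
    refine Finset.sum_nbij' (fun l => l.headI) (fun a => [a]) ?_ ?_ ?_ ?_ ?_
    · intro l hl
      simp only [Finset.mem_filter] at hl
      obtain ⟨hl, hlen⟩ := hl
      rcases mem_comps.mp hl with ⟨h1, h2, h3⟩
      match l, hlen with
      | [a], _ =>
        simp only [List.headI, Finset.mem_Icc]
        simp only [List.sum_cons, List.sum_nil, add_zero] at h1 h2
        exact ⟨h1, h2⟩
    · intro a ha
      simp only [Finset.mem_Icc] at ha
      simp only [Finset.mem_filter, List.length_singleton, and_true]
      exact mem_comps.mpr ⟨by simpa using ha.1, by simpa using ha.2,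
        by rintro x hx; simp at hx; omega⟩
    · intro l hl
      simp only [Finset.mem_filter] at hl
      match l, hl.2 with
      | [a], _ => rfl
    · intro a _; rfl
    · intro l hl
      simp only [Finset.mem_filter] at hl
      match l, hl.2 with
      | [a], _ => rfl
  have key2 : ∑ l ∈ (comps N).filter (fun l => ¬ l.length = 1), H l
      = ∑ a ∈ Finset.Icc 1 N, ∑ l ∈ comps (N - a), H (a :: l) := by
    have hsig := Finset.sum_sigma' (Finset.Icc 1 N) (fun a => comps (N - a))
      (fun a l => H (a :: l))
    rw [hsig]
    refine Finset.sum_nbij' (fun l => (⟨l.headI, l.tail⟩ : Σ _ : ℕ, List ℕ))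
      (fun x => x.1 :: x.2) ?_ ?_ ?_ ?_ ?_
    · intro l hl
      simp only [Finset.mem_filter] at hl
      obtain ⟨hl, hlen⟩ := hl
      rcases mem_comps.mp hl with ⟨h1, h2, h3⟩
      have hne : l ≠ [] := by intro h; rw [h] at h1; simp at h1
      match l with
      | a :: l' =>
        have hl'ne : l' ≠ [] := by
          intro h; rw [h] at hlen; simp at hlen
        have hl'pos : ∀ x ∈ l', 0 < x := fun x hx => h3 x (List.mem_cons_of_mem _ hx)
        have hsum' : 1 ≤ l'.sum := List.sum_pos l' hl'pos hl'ne
        have ha : 0 < a := h3 a (List.mem_cons_self)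
        simp only [List.sum_cons] at h2
        show (⟨a, l'⟩ : Σ _ : ℕ, List ℕ) ∈ (Finset.Icc 1 N).sigma (fun a => comps (N - a))
        refine Finset.mem_sigma.mpr ⟨Finset.mem_Icc.mpr ⟨ha, by show a ≤ N; omega⟩, ?_⟩
        show l' ∈ comps (N - a)
        exact mem_comps.mpr ⟨hsum', by omega, hl'pos⟩
    · intro x hx
      rcases Finset.mem_sigma.mp hx with ⟨hx1, hx2⟩
      simp only [Finset.mem_Icc] at hx1
      rcases mem_comps.mp hx2 with ⟨h1, h2, h3⟩
      have hne : x.2 ≠ [] := by intro h; rw [h] at h1; simp at h1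
      refine Finset.mem_filter.mpr ⟨mem_comps.mpr ⟨?_, ?_, ?_⟩, ?_⟩
      · simp only [List.sum_cons]; omega
      · simp only [List.sum_cons]; omega
      · rintro y hy
        rcases List.mem_cons.mp hy with rfl | hy
        · omega
        · exact h3 y hy
      · simp only [List.length_cons]
        have : 0 < x.2.length := List.length_pos_iff.mpr hne
        omega
    · intro l hl
      simp only [Finset.mem_filter] at hl
      have hne : l ≠ [] := comps_nonempty_mem hl.1
      match l with
      | a :: l' => rfl
    · intro x _; rfl
    · intro l hl
      simp only [Finset.mem_filter] at hl
      have hne : l ≠ [] := comps_nonempty_mem hl.1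
      match l with
      | a :: l' => rfl
  rw [← key, ← key2, Finset.sum_filter_add_sum_filter_not]


variable (p : MvPolynomial (Fin 2) ℤ) (c₁ c₀ : ℕ)

noncomputable def Tc (φ : ℕ → ℤ) (n : ℕ) : ℤ :=
  ∑ l ∈ comps n, if (l.map fun x => c₁ * x + c₀).sum = n then φ l.headI * Wt p l else 0

noncomputable def Fser (φ : ℕ → ℤ) : PowerSeries ℤ := mk (Tc p c₁ c₀ φ)

noncomputable def Gser (ψ : ℕ → ℤ) : PowerSeries ℤ :=
  mk fun n => ∑ a ∈ Finset.Icc 1 n, if c₁ * a + c₀ = n then ψ a else 0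

lemma le_L (hc₁ : 1 ≤ c₁) (a : ℕ) : a ≤ c₁ * a + c₀ :=
  le_add_right (Nat.le_mul_of_pos_left a hc₁)

lemma sum_le_mapL (hc₁ : 1 ≤ c₁) (l : List ℕ) :
    l.sum ≤ (l.map fun x => c₁ * x + c₀).sum := by
  induction l with
  | nil => simp
  | cons a l ih =>
    simp only [List.map_cons, List.sum_cons]
    exact Nat.add_le_add (le_L c₁ c₀ hc₁ a) ih

/-- sum over comps N of terms supported on Lsum = n' doesn't depend on N ≥ n' -/
lemma sum_comps_support (hc₁ : 1 ≤ c₁) {n' N : ℕ} (h : n' ≤ N) (f : List ℕ → ℤ) :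
    (∑ l ∈ comps N, if (l.map fun x => c₁ * x + c₀).sum = n' then f l else 0)
      = ∑ l ∈ comps n', if (l.map fun x => c₁ * x + c₀).sum = n' then f l else 0 := by
  refine (Finset.sum_subset (fun l hl => ?_) (fun l hl hnl => ?_)).symm
  · rcases mem_comps.mp hl with ⟨h1, h2, h3⟩
    exact mem_comps.mpr ⟨h1, le_trans h2 h, h3⟩
  · rcases mem_comps.mp hl with ⟨h1, h2, h3⟩
    rw [if_neg]
    intro hL
    have := sum_le_mapL c₁ c₀ hc₁ l
    exact hnl (mem_comps.mpr ⟨h1, by omega, h3⟩)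

lemma CL (hc₁ : 1 ≤ c₁) (φ : ℕ → ℤ) (n : ℕ) :
    Tc p c₁ c₀ φ n =
      (∑ a ∈ Finset.Icc 1 n, if c₁ * a + c₀ = n then φ a else 0) +
      ∑ a ∈ Finset.Icc 1 n,
        if c₁ * a + c₀ ≤ n then
          φ a * Tc p c₁ c₀ (fun b => MvPolynomial.eval ![(a : ℤ), (b : ℤ)] p) (n - (c₁ * a + c₀))
        else 0 := by
  rw [Tc, splitSum]
  congr 1
  · refine Finset.sum_congr rfl fun a _ => ?_
    simp [Wt_singleton]
  · refine Finset.sum_congr rfl fun a ha => ?_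
    rcases Finset.mem_Icc.mp ha with ⟨ha1, ha2⟩
    by_cases hLa : c₁ * a + c₀ ≤ n
    · rw [if_pos hLa, Tc, mul_comm (φ a),
        ← sum_comps_support c₁ c₀ hc₁ (show n - (c₁ * a + c₀) ≤ n - a by
          have := le_L c₁ c₀ hc₁ a; omega) ]
      rw [Finset.sum_mul]
      refine Finset.sum_congr rfl fun l hl => ?_
      have hlne := comps_nonempty_mem hl
      rw [Wt_cons p a hlne]
      simp only [List.map_cons, List.sum_cons, List.headI_cons]
      by_cases hc : (List.map (fun x => c₁ * x + c₀) l).sum = n - (c₁ * a + c₀)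
      · rw [if_pos hc, if_pos (by omega)]
        ring
      · rw [if_neg hc, if_neg (by omega), zero_mul]
    · rw [if_neg hLa]
      refine Finset.sum_eq_zero fun l hl => ?_
      simp only [List.map_cons, List.sum_cons, List.headI_cons]
      rw [if_neg (by omega)]

noncomputable def toPoly2 (q : MvPolynomial (Fin 2) ℤ) : Polynomial (Polynomial ℤ) :=
  MvPolynomial.eval₂ (Polynomial.C.comp Polynomial.C)
    ![Polynomial.C Polynomial.X, Polynomial.X] q

lemma eval_toPoly2 (q : MvPolynomial (Fin 2) ℤ) (a b : ℤ) :
    ((toPoly2 q).eval (Polynomial.C b)).eval a = MvPolynomial.eval ![a, b] q := by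
  induction q using MvPolynomial.induction_on with
  | C r =>
    simp only [toPoly2, MvPolynomial.eval₂_C, RingHom.comp_apply, Polynomial.eval_C,
      MvPolynomial.eval_C]
  | add f g hf hg =>
    simp only [toPoly2] at hf hg ⊢
    rw [MvPolynomial.eval₂_add, Polynomial.eval_add, Polynomial.eval_add, map_add, hf, hg]
  | mul_X f i hf =>
    simp only [toPoly2] at hf ⊢
    rw [MvPolynomial.eval₂_mul, MvPolynomial.eval₂_X, Polynomial.eval_mul, Polynomial.eval_mul,
      map_mul, hf]
    congr 1
    fin_cases i <;> simp

lemma eval_decomp (q : MvPolynomial (Fin 2) ℤ) (a b : ℤ) :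
    MvPolynomial.eval ![a, b] q =
      ∑ k ∈ Finset.range ((toPoly2 q).natDegree + 1),
        ((toPoly2 q).coeff k).eval a * b ^ k := by
  have h1 : (toPoly2 q).eval (Polynomial.C b)
      = ∑ k ∈ Finset.range ((toPoly2 q).natDegree + 1),
          (toPoly2 q).coeff k * (Polynomial.C b) ^ k := Polynomial.eval_eq_sum_range _
  rw [← eval_toPoly2, h1, Polynomial.eval_finset_sum]
  refine Finset.sum_congr rfl fun k _ => ?_
  simp [Polynomial.eval_mul, Polynomial.eval_pow]

lemma coeff_Gser (ψ : ℕ → ℤ) (n : ℕ) :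
    (coeff n) (Gser c₁ c₀ ψ) =
      ∑ a ∈ Finset.Icc 1 n, if c₁ * a + c₀ = n then ψ a else 0 := coeff_mk _ _

lemma coeff_Gser_mul (hc₁ : 1 ≤ c₁) (ψ : ℕ → ℤ) (g : PowerSeries ℤ) (n : ℕ) :
    (coeff n) (Gser c₁ c₀ ψ * g) =
      ∑ a ∈ Finset.Icc 1 n,
        if c₁ * a + c₀ ≤ n then ψ a * (coeff (n - (c₁ * a + c₀))) g else 0 := by
  rw [coeff_mul, Finset.Nat.sum_antidiagonal_eq_sum_range_succ_mk]
  have hk : ∀ k ∈ Finset.range (n + 1),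
      (coeff k) (Gser c₁ c₀ ψ) * (coeff (n - k)) g
        = ∑ a ∈ Finset.Icc 1 n, if c₁ * a + c₀ = k then ψ a * (coeff (n - k)) g else 0 := by
    intro k hkn
    rw [Finset.mem_range] at hkn
    rw [coeff_Gser, Finset.sum_mul]
    refine Eq.trans (Finset.sum_congr rfl fun a _ => ?_)
      (Finset.sum_subset (Finset.Icc_subset_Icc_right (by omega : k ≤ n))
        (fun a ha hna => ?_))
    · rw [ite_mul, zero_mul]
    · rw [Finset.mem_Icc] at ha hna
      have := le_L c₁ c₀ hc₁ a
      exact if_neg (by omega)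
  rw [Finset.sum_congr rfl hk, Finset.sum_comm]
  refine Finset.sum_congr rfl fun a _ => ?_
  rw [Finset.sum_ite_eq (Finset.range (n + 1)) (c₁ * a + c₀)
    (fun k => ψ a * (coeff (n - k)) g)]
  simp only [Finset.mem_range, Nat.lt_succ_iff]

lemma Tc_poly_sum (a : ℕ) (m : ℕ) :
    ∑ k ∈ Finset.range ((toPoly2 p).natDegree + 1),
        ((toPoly2 p).coeff k).eval (a : ℤ) * Tc p c₁ c₀ (fun b => (b : ℤ) ^ k) m
      = Tc p c₁ c₀ (fun b => MvPolynomial.eval ![(a : ℤ), (b : ℤ)] p) m := by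
  simp only [Tc, Finset.mul_sum]
  rw [Finset.sum_comm]
  refine Finset.sum_congr rfl fun l _ => ?_
  by_cases hc : (List.map (fun x => c₁ * x + c₀) l).sum = m
  · simp only [if_pos hc]
    rw [eval_decomp p (a : ℤ) (l.headI : ℤ), Finset.sum_mul]
    refine Finset.sum_congr rfl fun k _ => ?_
    ring
  · simp only [if_neg hc, mul_zero, Finset.sum_const_zero]

lemma REC (hc₁ : 1 ≤ c₁) (φ : ℕ → ℤ) :
    Fser p c₁ c₀ φ = Gser c₁ c₀ φ +
      ∑ k ∈ Finset.range ((toPoly2 p).natDegree + 1),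
        Gser c₁ c₀ (fun a => φ a * ((toPoly2 p).coeff k).eval (a : ℤ)) *
          Fser p c₁ c₀ (fun b => (b : ℤ) ^ k) := by
  ext n
  rw [map_add, map_sum]
  have hterm : ∀ k ∈ Finset.range ((toPoly2 p).natDegree + 1),
      (coeff n) (Gser c₁ c₀ (fun a => φ a * ((toPoly2 p).coeff k).eval (a : ℤ)) *
        Fser p c₁ c₀ (fun b => (b : ℤ) ^ k))
      = ∑ a ∈ Finset.Icc 1 n,
          if c₁ * a + c₀ ≤ n then
            φ a * (((toPoly2 p).coeff k).eval (a : ℤ) *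
              Tc p c₁ c₀ (fun b => (b : ℤ) ^ k) (n - (c₁ * a + c₀)))
          else 0 := by
    intro k _
    rw [coeff_Gser_mul c₁ c₀ hc₁]
    refine Finset.sum_congr rfl fun a _ => ?_
    rw [Fser, coeff_mk, mul_assoc]
  rw [Finset.sum_congr rfl hterm, Finset.sum_comm]
  have hinner : ∀ a ∈ Finset.Icc 1 n,
      (∑ k ∈ Finset.range ((toPoly2 p).natDegree + 1),
        if c₁ * a + c₀ ≤ n then
          φ a * (((toPoly2 p).coeff k).eval (a : ℤ) *
            Tc p c₁ c₀ (fun b => (b : ℤ) ^ k) (n - (c₁ * a + c₀)))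
        else 0)
      = if c₁ * a + c₀ ≤ n then
          φ a * Tc p c₁ c₀ (fun b => MvPolynomial.eval ![(a : ℤ), (b : ℤ)] p)
            (n - (c₁ * a + c₀))
        else 0 := by
    intro a _
    by_cases h : c₁ * a + c₀ ≤ n
    · simp only [if_pos h, ← Finset.mul_sum, Tc_poly_sum]
    · simp only [if_neg h, Finset.sum_const_zero]
  rw [Finset.sum_congr rfl hinner]
  rw [Fser, coeff_mk, coeff_Gser, CL p c₁ c₀ hc₁ φ n]


/-- the subring of rational power series -/
noncomputable def ratSub : Subring (PowerSeries ℤ) where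
  carrier := {f | ∃ P Q : Polynomial ℤ, Q.coeff 0 ≠ 0 ∧
    (Q : PowerSeries ℤ) * f = (P : PowerSeries ℤ)}
  zero_mem' := ⟨0, 1, by simp, by simp⟩
  one_mem' := ⟨1, 1, by simp, by simp⟩
  add_mem' := by
    rintro a b ⟨Pa, Qa, ha0, ha⟩ ⟨Pb, Qb, hb0, hb⟩
    refine ⟨Qb * Pa + Qa * Pb, Qa * Qb, by rw [Polynomial.mul_coeff_zero]; exact mul_ne_zero ha0 hb0, ?_⟩
    have : ((Qa * Qb : Polynomial ℤ) : PowerSeries ℤ) * (a + b)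
        = (Qb : PowerSeries ℤ) * ((Qa : PowerSeries ℤ) * a)
          + (Qa : PowerSeries ℤ) * ((Qb : PowerSeries ℤ) * b) := by
      rw [Polynomial.coe_mul]; ring
    rw [this, ha, hb, Polynomial.coe_add, Polynomial.coe_mul, Polynomial.coe_mul]
  mul_mem' := by
    rintro a b ⟨Pa, Qa, ha0, ha⟩ ⟨Pb, Qb, hb0, hb⟩
    refine ⟨Pa * Pb, Qa * Qb, by rw [Polynomial.mul_coeff_zero]; exact mul_ne_zero ha0 hb0, ?_⟩
    have : ((Qa * Qb : Polynomial ℤ) : PowerSeries ℤ) * (a * b)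
        = ((Qa : PowerSeries ℤ) * a) * ((Qb : PowerSeries ℤ) * b) := by
      rw [Polynomial.coe_mul]; ring
    rw [this, ha, hb, Polynomial.coe_mul]
  neg_mem' := by
    rintro a ⟨Pa, Qa, ha0, ha⟩
    exact ⟨-Pa, Qa, ha0, by rw [Polynomial.coe_neg, mul_neg, ha]⟩

lemma poly_mem_ratSub (P : Polynomial ℤ) : (P : PowerSeries ℤ) ∈ ratSub :=
  ⟨P, 1, by simp, by rw [Polynomial.coe_one, one_mul]⟩

lemma det_mem_ratSub {n : ℕ} (M : Matrix (Fin n) (Fin n) (PowerSeries ℤ))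
    (h : ∀ i j, M i j ∈ ratSub) : M.det ∈ ratSub := by
  rw [Matrix.det_apply]
  refine Subring.sum_mem _ fun σ _ => ?_
  rw [Units.smul_def]
  exact Subring.zsmul_mem _ (Subring.prod_mem _ fun i _ => h _ _) _

lemma adjugate_mem_ratSub {n : ℕ} (M : Matrix (Fin n) (Fin n) (PowerSeries ℤ))
    (h : ∀ i j, M i j ∈ ratSub) (i j : Fin n) : M.adjugate i j ∈ ratSub := by
  rw [Matrix.adjugate_apply]
  refine det_mem_ratSub _ fun i' j' => ?_
  rw [Matrix.updateRow_apply]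
  split
  · by_cases hij : j' = i
    · rw [hij, Pi.single_eq_same]; exact Subring.one_mem _
    · rw [Pi.single_eq_of_ne hij]; exact Subring.zero_mem _
  · exact h _ _

-- unique solution helpers
lemma L_inj (hc₁ : 1 ≤ c₁) {a a' : ℕ} (h : c₁ * a + c₀ = c₁ * a' + c₀) : a = a' :=
  Nat.eq_of_mul_eq_mul_left hc₁ (by omega)

lemma Gser_sum_eq_of_sol (hc₁ : 1 ≤ c₁) {n m a₀ : ℕ} (f : ℕ → ℤ) (h1 : 1 ≤ a₀) (h2 : a₀ ≤ m)
    (he : c₁ * a₀ + c₀ = n) :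
    (∑ a ∈ Finset.Icc 1 m, if c₁ * a + c₀ = n then f a else 0) = f a₀ := by
  rw [Finset.sum_eq_single_of_mem a₀ (Finset.mem_Icc.mpr ⟨h1, h2⟩)
    (fun b _ hb => if_neg fun hc => hb (L_inj c₁ c₀ hc₁ (by omega))), if_pos he]

lemma Gser_sum_eq_zero {n m : ℕ} (f : ℕ → ℤ) (h : ∀ a, 1 ≤ a → c₁ * a + c₀ ≠ n) :
    (∑ a ∈ Finset.Icc 1 m, if c₁ * a + c₀ = n then f a else 0) = 0 :=
  Finset.sum_eq_zero fun a ha => if_neg (h a (Finset.mem_Icc.mp ha).1)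

lemma coeff_X_pow_mul' (f : PowerSeries ℤ) (m n : ℕ) :
    (coeff n) ((X : PowerSeries ℤ) ^ m * f)
      = if m ≤ n then (coeff (n - m)) f else 0 := by
  by_cases h : m ≤ n
  · obtain ⟨d, rfl⟩ : ∃ d, n = d + m := ⟨n - m, by omega⟩
    rw [if_pos h, coeff_X_pow_mul, Nat.add_sub_cancel]
  · rw [if_neg h, coeff_mul]
    refine Finset.sum_eq_zero fun q hq => ?_
    have hq : q.1 + q.2 = n := by simpa using hq
    rw [coeff_X_pow, if_neg (by omega), zero_mul]

/-- key shift identity -/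
lemma Gser_key (hc₁ : 1 ≤ c₁) (ψ : Polynomial ℤ) :
    Gser c₁ c₀ (fun a => ψ.eval (a : ℤ))
      = (X : PowerSeries ℤ) ^ c₁ * Gser c₁ c₀ (fun a => ψ.eval ((a : ℤ) + 1))
        + PowerSeries.C (ψ.eval 1) * X ^ (c₁ + c₀) := by
  ext n
  rw [map_add, coeff_X_pow_mul', coeff_C_mul, coeff_X_pow, Gser, Gser, coeff_mk]
  by_cases hex : ∃ a, 1 ≤ a ∧ c₁ * a + c₀ = n
  · obtain ⟨a₀, h1, he⟩ := hex
    have hLa := le_L c₁ c₀ hc₁ a₀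
    rw [Gser_sum_eq_of_sol c₁ c₀ hc₁ _ h1 (by omega) he]
    by_cases ha1 : a₀ = 1
    · subst ha1
      have h2 : n = c₁ + c₀ := by omega
      rw [if_pos h2, if_pos (by omega : c₁ ≤ n), coeff_mk]
      rw [Gser_sum_eq_zero c₁ c₀ _ (fun a ha hc => by
        have := Nat.le_mul_of_pos_right c₁ (show 0 < a by omega)
        omega)]
      simp
    · have ha2 : 2 ≤ a₀ := by omega
      have h2c : c₁ * 2 ≤ c₁ * a₀ := Nat.mul_le_mul_left c₁ ha2
      rw [if_neg (show ¬ n = c₁ + c₀ by omega), if_pos (by omega : c₁ ≤ n), coeff_mk]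
      have hmul : c₁ * (a₀ - 1) + c₁ = c₁ * a₀ := by
        rw [← Nat.mul_succ]; congr 1; omega
      have he' : c₁ * (a₀ - 1) + c₀ = n - c₁ := by omega
      have hLa' := le_L c₁ c₀ hc₁ (a₀ - 1)
      rw [Gser_sum_eq_of_sol c₁ c₀ hc₁ _ (by omega) (by omega) he']
      rw [mul_zero, add_zero]
      congr 1
      omega
  · push_neg at hex
    rw [Gser_sum_eq_zero c₁ c₀ _ fun a ha => hex a ha]
    have hn2 : ¬ n = c₁ + c₀ := fun h => hex 1 le_rfl (by omega)
    rw [if_neg hn2, mul_zero, add_zero]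
    by_cases hc : c₁ ≤ n
    · rw [if_pos hc, coeff_mk, Gser_sum_eq_zero c₁ c₀ _ fun a ha hce => ?_]
      have : c₁ * (a + 1) + c₀ = n := by rw [Nat.mul_succ]; omega
      exact hex (a + 1) (by omega) this
    · rw [if_neg hc]

lemma Gser_sub (f g : ℕ → ℤ) :
    Gser c₁ c₀ (fun a => f a - g a) = Gser c₁ c₀ f - Gser c₁ c₀ g := by
  ext n
  rw [map_sub, Gser, Gser, Gser, coeff_mk, coeff_mk, coeff_mk, ← Finset.sum_sub_distrib]
  refine Finset.sum_congr rfl fun a _ => ?_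
  split <;> simp

lemma Gser_zero : Gser c₁ c₀ (fun _ => 0) = 0 := by
  ext n
  rw [Gser, coeff_mk, map_zero]
  exact Finset.sum_eq_zero fun a _ => by rw [ite_self]

/-- the induction step -/
lemma ratG_step (hc₁ : 1 ≤ c₁) (ψ : Polynomial ℤ)
    (hδ : Gser c₁ c₀ (fun a => (ψ.comp (Polynomial.X + 1) - ψ).eval (a : ℤ)) ∈ ratSub) :
    Gser c₁ c₀ (fun a => ψ.eval (a : ℤ)) ∈ ratSub := by
  obtain ⟨P, Q, hQ0, hQ⟩ := hδ
  have hkey := Gser_key c₁ c₀ hc₁ ψ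
  have hshift : Gser c₁ c₀ (fun a => ψ.eval ((a : ℤ) + 1))
      = Gser c₁ c₀ (fun a => (ψ.comp (Polynomial.X + 1) - ψ).eval (a : ℤ))
        + Gser c₁ c₀ (fun a => ψ.eval (a : ℤ)) := by
    have : (fun a : ℕ => ψ.eval ((a : ℤ) + 1))
        = fun a : ℕ => (ψ.comp (Polynomial.X + 1) - ψ).eval (a : ℤ) + ψ.eval (a : ℤ) := by
      funext a
      simp [Polynomial.eval_comp]
    rw [this]
    ext n
    rw [map_add, Gser, Gser, Gser, coeff_mk, coeff_mk, coeff_mk, ← Finset.sum_add_distrib]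
    refine Finset.sum_congr rfl fun a _ => ?_
    split <;> simp
  refine ⟨Polynomial.X ^ c₁ * P + Q * Polynomial.C (ψ.eval 1) * Polynomial.X ^ (c₁ + c₀),
    Q * (1 - Polynomial.X ^ c₁), ?_, ?_⟩
  · rw [Polynomial.mul_coeff_zero]
    have : (1 - Polynomial.X ^ c₁ : Polynomial ℤ).coeff 0 = 1 := by
      rw [Polynomial.coeff_sub, Polynomial.coeff_one, Polynomial.coeff_X_pow,
        if_pos rfl, if_neg (by omega), sub_zero]
    rw [this, mul_one]
    exact hQ0
  · simp only [Polynomial.coe_mul, Polynomial.coe_sub, Polynomial.coe_add, Polynomial.coe_one,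
      Polynomial.coe_pow, Polynomial.coe_X, Polynomial.coe_C]
    linear_combination (Q : PowerSeries ℤ) * hkey
      + ((X : PowerSeries ℤ) ^ c₁ * (Q : PowerSeries ℤ)) * hshift
      + ((X : PowerSeries ℤ) ^ c₁) * hQ

lemma ratG (hc₁ : 1 ≤ c₁) (ψ : Polynomial ℤ) :
    Gser c₁ c₀ (fun a => ψ.eval (a : ℤ)) ∈ ratSub := by
  suffices H : ∀ d (ψ : Polynomial ℤ), ψ.natDegree ≤ d →
      Gser c₁ c₀ (fun a => ψ.eval (a : ℤ)) ∈ ratSub from H ψ.natDegree ψ le_rfl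
  intro d
  induction d with
  | zero =>
    intro ψ hd
    refine ratG_step c₁ c₀ hc₁ ψ ?_
    have : ψ.comp (Polynomial.X + 1) - ψ = 0 := by
      conv_lhs => rw [Polynomial.eq_C_of_natDegree_le_zero hd]
      rw [Polynomial.C_comp, sub_self]
    rw [this]
    simpa using (Gser_zero c₁ c₀ ▸ Subring.zero_mem ratSub)
  | succ d ih =>
    intro ψ hd
    by_cases hδ0 : ψ.comp (Polynomial.X + 1) - ψ = 0
    · refine ratG_step c₁ c₀ hc₁ ψ ?_
      rw [hδ0]
      simpa using (Gser_zero c₁ c₀ ▸ Subring.zero_mem ratSub)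
    · refine ratG_step c₁ c₀ hc₁ ψ (ih _ ?_)
      by_cases hψd : ψ.natDegree = 0
      · exact absurd (by
          conv_lhs => rw [Polynomial.eq_C_of_natDegree_le_zero hψd.le]
          rw [Polynomial.C_comp, sub_self] : ψ.comp (Polynomial.X + 1) - ψ = 0) hδ0
      · have hψ0 : ψ ≠ 0 := fun h => hψd (by rw [h]; simp)
        have hX1 : (Polynomial.X + 1 : Polynomial ℤ).natDegree = 1 := by
          rw [show (Polynomial.X + 1 : Polynomial ℤ) = Polynomial.X + Polynomial.C 1 by simp]
          exact Polynomial.natDegree_X_add_C 1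
        have hcompdeg : (ψ.comp (Polynomial.X + 1)).natDegree = ψ.natDegree := by
          rw [Polynomial.natDegree_comp, hX1, mul_one]
        have hcomp0 : ψ.comp (Polynomial.X + 1) ≠ 0 := by
          intro h
          rw [h, Polynomial.natDegree_zero] at hcompdeg
          omega
        have hdegeq : (ψ.comp (Polynomial.X + 1)).degree = ψ.degree := by
          rw [Polynomial.degree_eq_natDegree hcomp0, Polynomial.degree_eq_natDegree hψ0,
            hcompdeg]
        have hlead : (ψ.comp (Polynomial.X + 1)).leadingCoeff = ψ.leadingCoeff := by
          rw [Polynomial.leadingCoeff_comp (by omega)]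
          have : (Polynomial.X + 1 : Polynomial ℤ).leadingCoeff = 1 := by
            rw [show (Polynomial.X + 1 : Polynomial ℤ) = Polynomial.X + Polynomial.C 1 by simp]
            exact Polynomial.leadingCoeff_X_add_C 1
          rw [this, one_pow, mul_one]
        have hlt := Polynomial.degree_sub_lt hdegeq hcomp0 hlead
        rw [hdegeq] at hlt
        have := Polynomial.natDegree_lt_natDegree hδ0 hlt
        omega


end Temperley

/-- The generating function `f(t) = Σ_C t^{Σ L(aᵢ)} ∏_{i<r} p(aᵢ,aᵢ₊₁)` over all
(nonempty) compositions `C = (a₁,…,a_r)`, where `L(x) = c₁x + c₀`.  Since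
`L(x) ≥ x` when `c₁ ≥ 1`, the coefficient of `tⁿ` is a finite sum over
compositions of `m` with `1 ≤ m ≤ n`. -/
noncomputable def temperleySeries (p : MvPolynomial (Fin 2) ℤ) (c₁ c₀ : ℕ) :
    PowerSeries ℤ :=
  PowerSeries.mk fun n =>
    ∑ m ∈ Finset.Icc 1 n, ∑ c : Composition m,
      if (c.blocks.map fun x => c₁ * x + c₀).sum = n then
        ((c.blocks.zip c.blocks.tail).map fun q =>
          MvPolynomial.eval ![(q.1 : ℤ), (q.2 : ℤ)] p).prod
      else 0

namespace Temperley

lemma temperley_eq_Fser (p : MvPolynomial (Fin 2) ℤ) (c₁ c₀ : ℕ) :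
    temperleySeries p c₁ c₀ = Fser p c₁ c₀ (fun _ => 1) := by
  ext n
  rw [temperleySeries, Fser, coeff_mk, coeff_mk]
  simp only [Tc, one_mul]
  rw [← sum_comps n (fun l => if (l.map fun x => c₁ * x + c₀).sum = n then Wt p l else 0)]
  refine Finset.sum_congr rfl fun m _ => Finset.sum_congr rfl fun c _ => ?_
  simp only [Wt]

end Temperley

open Temperley in
/-- For any integer polynomial `p(a,b)` and affine-linear `L(a) = c₁a + c₀`
(`c₁ ≥ 1`, `c₀ ≥ 0`), the generating function of weighted compositions is a
rational function of `t`. -/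
theorem temperleySeries_rational (p : MvPolynomial (Fin 2) ℤ) (c₁ c₀ : ℕ)
    (hc₁ : 1 ≤ c₁) :
    ∃ P Q : Polynomial ℤ, Q.coeff 0 ≠ 0 ∧
      (Q : PowerSeries ℤ) * temperleySeries p c₁ c₀ = (P : PowerSeries ℤ) := by
  classical
  set K := (toPoly2 p).natDegree + 1 with hK
  set A : Matrix (Fin K) (Fin K) (PowerSeries ℤ) := fun j k =>
    Gser c₁ c₀ (fun a => (a : ℤ) ^ (j : ℕ) * ((toPoly2 p).coeff (k : ℕ)).eval (a : ℤ)) with hA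
  set v : Fin K → PowerSeries ℤ := fun j => Fser p c₁ c₀ (fun b => (b : ℤ) ^ (j : ℕ)) with hv
  set s : Fin K → PowerSeries ℤ := fun j => Gser c₁ c₀ (fun a => (a : ℤ) ^ (j : ℕ)) with hs
  have hrec : ∀ j : Fin K, v j = s j + ∑ k : Fin K, A j k * v k := by
    intro j
    have := REC p c₁ c₀ hc₁ (fun b => (b : ℤ) ^ (j : ℕ))
    rw [hv, hA, hs]
    simp only []
    rw [Fin.sum_univ_eq_sum_range (fun k => Gser c₁ c₀
      (fun a => (a : ℤ) ^ (j : ℕ) * ((toPoly2 p).coeff k).eval (a : ℤ)) *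
      Fser p c₁ c₀ (fun b => (b : ℤ) ^ k)) K]
    exact this
  have hvec : (1 - A).mulVec v = s := by
    funext j
    rw [Matrix.sub_mulVec, Matrix.one_mulVec, Pi.sub_apply]
    have : A.mulVec v j = ∑ k : Fin K, A j k * v k := by
      simp [Matrix.mulVec, dotProduct]
    rw [this, hrec j]
    ring
  have hdet : (1 - A).det • v = (1 - A).adjugate.mulVec s := by
    rw [← hvec, Matrix.mulVec_mulVec, Matrix.adjugate_mul, Matrix.smul_mulVec,
      Matrix.one_mulVec]
  have hAmem : ∀ j k : Fin K, A j k ∈ ratSub := by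
    intro j k
    have : A j k = Gser c₁ c₀
        (fun a => (Polynomial.X ^ (j : ℕ) * (toPoly2 p).coeff (k : ℕ)).eval (a : ℤ)) := by
      rw [hA]
      funext a
      simp [Polynomial.eval_mul, Polynomial.eval_pow]
    rw [this]
    exact ratG c₁ c₀ hc₁ _
  have h1Amem : ∀ j k : Fin K, (1 - A) j k ∈ ratSub := by
    intro j k
    refine Subring.sub_mem _ ?_ (hAmem j k)
    rw [Matrix.one_apply]
    split
    · exact Subring.one_mem _
    · exact Subring.zero_mem _
  have hsmem : ∀ k : Fin K, s k ∈ ratSub := by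
    intro k
    have : s k = Gser c₁ c₀ (fun a => (Polynomial.X ^ (k : ℕ) : Polynomial ℤ).eval (a : ℤ)) := by
      rw [hs]; funext a; simp
    rw [this]
    exact ratG c₁ c₀ hc₁ _
  have hdetmem : (1 - A).det ∈ ratSub := det_mem_ratSub _ h1Amem
  have hSmem : ((1 - A).adjugate.mulVec s) 0 ∈ ratSub := by
    have : ((1 - A).adjugate.mulVec s) 0 = ∑ k : Fin K, (1 - A).adjugate 0 k * s k := by
      simp [Matrix.mulVec, dotProduct]
    rw [this]
    exact Subring.sum_mem _ fun k _ =>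
      Subring.mul_mem _ (adjugate_mem_ratSub _ h1Amem 0 k) (hsmem k)
  have h0 : (1 - A).det * v 0 = ((1 - A).adjugate.mulVec s) 0 := by
    have := congrFun hdet 0
    rwa [Pi.smul_apply, smul_eq_mul] at this
  -- constant coefficient of det is 1
  have hconst : PowerSeries.constantCoeff (R := ℤ) ((1 - A).det) = 1 := by
    have hmap : (1 - A).map (PowerSeries.constantCoeff (R := ℤ)) = 1 := by
      ext i j
      rw [Matrix.map_apply, Matrix.sub_apply]
      have hAij : PowerSeries.constantCoeff (R := ℤ) (A i j) = 0 := by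
        rw [hA]
        simp only []
        rw [← PowerSeries.coeff_zero_eq_constantCoeff_apply, Gser, coeff_mk]
        simp
      rw [map_sub, hAij, sub_zero]
      rw [Matrix.one_apply, Matrix.one_apply]
      split <;> simp
    calc PowerSeries.constantCoeff (R := ℤ) ((1 - A).det)
        = ((1 - A).map (PowerSeries.constantCoeff (R := ℤ))).det := (RingHom.map_det _ _)
      _ = 1 := by rw [hmap, Matrix.det_one]
  obtain ⟨Pd, Qd, hQd0, hQd⟩ := hdetmem
  obtain ⟨Ps, Qs, hQs0, hQs⟩ := hSmem
  have hPd0 : Pd.coeff 0 ≠ 0 := by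
    have h2 := congrArg (PowerSeries.constantCoeff (R := ℤ)) hQd
    rw [map_mul, hconst, mul_one, ← PowerSeries.coeff_zero_eq_constantCoeff_apply,
      ← PowerSeries.coeff_zero_eq_constantCoeff_apply, Polynomial.coeff_coe,
      Polynomial.coeff_coe] at h2
    rw [← h2]
    exact hQd0
  refine ⟨Qd * Ps, Qs * Pd, ?_, ?_⟩
  · rw [Polynomial.mul_coeff_zero]
    exact mul_ne_zero hQs0 hPd0
  · have hT : temperleySeries p c₁ c₀ = v 0 := by
      rw [temperley_eq_Fser p c₁ c₀, hv]
      congr 1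
    rw [hT, Polynomial.coe_mul, Polynomial.coe_mul]
    calc (Qs : PowerSeries ℤ) * (Pd : PowerSeries ℤ) * v 0
        = (Qs : PowerSeries ℤ) * ((Qd : PowerSeries ℤ) * (1 - A).det * v 0) := by
          rw [hQd]; ring
      _ = (Qd : PowerSeries ℤ) * ((Qs : PowerSeries ℤ) * (((1 - A).adjugate.mulVec s) 0)) := by
          rw [mul_assoc ((Qd : PowerSeries ℤ)), h0]; ring
      _ = (Qd : PowerSeries ℤ) * (Ps : PowerSeries ℤ) := by rw [hQs]
end

section
/- The generating function for locally stable horizontally convex polyominoes is t(1+t-t^2-t^3)/(1-t-3t^2). Precisely, with two colors where color 1 has L_1(a)=2a, color 2 has L_2(a)=2a-1, and transition weights p_{11}(a,b)=2a-1, p_{12}(a,b)=2a, p_{21}(a,b)=2a-2, p_{22}(a,b)=2a-1, the weighted sum over all colored compositions of t^{Σ L_{k_i}(a_i)} ∏ p_{k_i,k_{i+1}}(a_i,a_{i+1}) equals t(1+t-t^2-t^3)/(1-t-3t^2). -/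
open PowerSeries

/-- Areas: color `0` (even floors, width `2a`) has `L₁(a) = 2a`; color `1`
(odd floors, width `2a-1`) has `L₂(a) = 2a - 1`. -/
def Lstable : Fin 2 → ℕ → ℕ := fun i a => if i = 0 then 2 * a else 2 * a - 1

/-- Transition weights: `p₁₁(a,b) = 2a-1`, `p₁₂(a,b) = 2a`, `p₂₁(a,b) = 2a-2`,
`p₂₂(a,b) = 2a-1`. -/
def pstable : Fin 2 → Fin 2 → ℕ → ℤ := fun i j a =>
  if i = 0 then (if j = 0 then 2 * (a : ℤ) - 1 else 2 * (a : ℤ))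
  else (if j = 0 then 2 * (a : ℤ) - 2 else 2 * (a : ℤ) - 1)

/-- The weighted sum over all colored compositions (colored by `Fin 2`) of
`t^{Σ L_{kᵢ}(aᵢ)} ∏_{i<r} p_{kᵢ,kᵢ₊₁}(aᵢ,aᵢ₊₁)`.  Since `L_k(a) ≥ a`, the
coefficient of `tⁿ` is the finite sum over colored compositions of `m ≤ n`. -/
noncomputable def stableGF : PowerSeries ℤ :=
  PowerSeries.mk fun n =>
    ∑ m ∈ Finset.Icc 1 n, ∑ c : Composition m, ∑ k : Fin c.length → Fin 2,
      if (∑ i, Lstable (k i) (c.blocksFun i)) = n then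
        ∏ i : Fin (c.length - 1),
          pstable (k ⟨i.1, by omega⟩) (k ⟨i.1 + 1, by omega⟩)
            (c.blocksFun ⟨i.1, by omega⟩)
      else 0

namespace StableAux

abbrev XX := ℕ × Fin 2

/-- total area of a colored list -/
def LS (l : List XX) : ℕ := (l.map fun x => Lstable x.2 x.1).sum

/-- product of transition weights of a colored list -/
def W : List XX → ℤ
  | [] => 1
  | [_] => 1
  | x :: y :: t => pstable x.2 y.2 x.1 * W (y :: t)

def pc (l : List XX) (i : ℕ) : ℤ :=
  pstable (l.getD i default).2 (l.getD (i + 1) default).2 (l.getD i default).1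

def box (N : ℕ) : Finset XX := Finset.Icc 1 N ×ˢ Finset.univ

def listsLe (s : Finset XX) : ℕ → Finset (List XX)
  | 0 => {[]}
  | k + 1 => {[]} ∪ (s ×ˢ listsLe s k).image fun p => p.1 :: p.2

lemma Lstable_pos {j : Fin 2} {a : ℕ} (ha : 1 ≤ a) : 1 ≤ Lstable j a := by
  simp only [Lstable]; split <;> omega

lemma le_Lstable {j : Fin 2} {a : ℕ} : a ≤ Lstable j a := by
  simp only [Lstable]; split <;> omega

@[simp] lemma LS_nil : LS [] = 0 := rfl

@[simp] lemma LS_cons (x : XX) (t : List XX) : LS (x :: t) = Lstable x.2 x.1 + LS t := rfl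

lemma LS_pos {l : List XX} (h : l ≠ []) (h2 : ∀ x ∈ l, 1 ≤ x.1) : 1 ≤ LS l := by
  match l with
  | x :: t =>
    have := Lstable_pos (j := x.2) (h2 x (by simp))
    simp only [LS_cons]; omega

lemma sumfst_le_LS {l : List XX} (h2 : ∀ x ∈ l, 1 ≤ x.1) :
    (l.map Prod.fst).sum ≤ LS l := by
  induction l with
  | nil => simp
  | cons x t ih =>
    have := le_Lstable (j := x.2) (a := x.1)
    have := ih (fun y hy => h2 y (by simp [hy]))
    simp only [List.map_cons, List.sum_cons, LS_cons]; omega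

lemma one_le_sumfst {l : List XX} (h : l ≠ []) (h2 : ∀ x ∈ l, 1 ≤ x.1) :
    1 ≤ (l.map Prod.fst).sum := by
  match l with
  | x :: t =>
    have := h2 x (by simp)
    simp only [List.map_cons, List.sum_cons]; omega

lemma mem_listsLe {s : Finset XX} {k : ℕ} {l : List XX} :
    l ∈ listsLe s k ↔ l.length ≤ k ∧ ∀ x ∈ l, x ∈ s := by
  induction k generalizing l with
  | zero =>
    simp only [listsLe, Finset.mem_singleton]
    constructor
    · rintro rfl; simp
    · rintro ⟨h1, -⟩; exact List.eq_nil_of_length_eq_zero (by omega)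
  | succ k ih =>
    simp only [listsLe, Finset.mem_union, Finset.mem_singleton, Finset.mem_image,
      Finset.mem_product] at *
    constructor
    · rintro (rfl | ⟨⟨x, t⟩, ⟨hx, ht⟩, rfl⟩)
      · simp
      · have := ih.1 ht
        constructor
        · simpa only [List.length_cons, Nat.succ_le_succ_iff] using this.1
        · intro y hy
          rcases List.mem_cons.1 hy with rfl | hy
          · exact hx
          · exact this.2 y hy
    · rintro ⟨h1, h2⟩
      match l with
      | [] => exact Or.inl rfl
      | x :: t =>
        refine Or.inr ⟨(x, t), ⟨h2 x (by simp), ih.2 ⟨by simpa using h1, fun y hy => h2 y (by simp [hy])⟩⟩, rfl⟩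

lemma nil_mem_listsLe {s : Finset XX} {k : ℕ} : [] ∈ listsLe s k := by
  rw [mem_listsLe]; simp

lemma sum_listsLe_succ {s : Finset XX} {k : ℕ} (f : List XX → ℤ) :
    ∑ l ∈ listsLe s (k + 1), f l = f [] + ∑ x ∈ s, ∑ t ∈ listsLe s k, f (x :: t) := by
  rw [listsLe, Finset.sum_union, Finset.sum_singleton, Finset.sum_image, Finset.sum_product]
  · rintro ⟨x, t⟩ - ⟨y, u⟩ - h
    simpa [Prod.ext_iff] using h
  · simp only [Finset.disjoint_left, Finset.mem_singleton, Finset.mem_image]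
    rintro l rfl ⟨p, -, h⟩
    exact List.cons_ne_nil _ _ h


@[simp] lemma W_nil : W [] = 1 := rfl
@[simp] lemma W_single (x : XX) : W [x] = 1 := rfl
lemma W_cons_cons (x y : XX) (t : List XX) :
    W (x :: y :: t) = pstable x.2 y.2 x.1 * W (y :: t) := rfl

lemma W_eq_prod (l : List XX) :
    W l = ∏ i ∈ Finset.range (l.length - 1), pc l i := by
  induction l with
  | nil => simp
  | cons x t ih =>
    match t with
    | [] => simp
    | y :: u =>
      rw [W_cons_cons, ih]
      have hlen : (x :: y :: u).length - 1 = ((y :: u).length - 1) + 1 := by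
        simp
      rw [hlen, Finset.prod_range_succ']
      have h1 : ∀ i, pc (x :: y :: u) (i + 1) = pc (y :: u) i := by
        intro i; simp [pc]
      have h2 : pc (x :: y :: u) 0 = pstable x.2 y.2 x.1 := by
        simp [pc]
      rw [h2]
      rw [Finset.prod_congr rfl fun i _ => h1 i]
      ring

/-- recursively defined generating sequence, split by initial color -/
def G : ℕ → Fin 2 → ℤ
  | n, j => ∑ a ∈ Finset.Icc 1 n,
      ((if Lstable j a = n then (1 : ℤ) else 0) +
        if h : 1 ≤ a ∧ Lstable j a < n then
          ∑ j' : Fin 2, pstable j j' a * G (n - Lstable j a) j'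
        else 0)
  termination_by n => n
  decreasing_by
    have := Lstable_pos (j := j) h.1
    omega

@[simp] lemma G_zero (j : Fin 2) : G 0 j = 0 := by
  rw [G]; simp

lemma G_eq (n : ℕ) (j : Fin 2) (N : ℕ) (hN : n ≤ N) :
    G n j = ∑ a ∈ Finset.Icc 1 N,
      ((if Lstable j a = n then (1 : ℤ) else 0) +
        ∑ j' : Fin 2, pstable j j' a * G (n - Lstable j a) j') := by
  rw [G]
  rw [Finset.sum_subset (Finset.Icc_subset_Icc_right hN)]
  · apply Finset.sum_congr rfl
    intro a ha
    have ha1 : 1 ≤ a := (Finset.mem_Icc.1 ha).1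
    congr 1
    by_cases h : 1 ≤ a ∧ Lstable j a < n
    · rw [dif_pos h]
    · rw [dif_neg h]
      have hge : n ≤ Lstable j a := by omega
      have : n - Lstable j a = 0 := by omega
      rw [this]
      simp
  · intro a ha hna
    have ha1 : 1 ≤ a := (Finset.mem_Icc.1 ha).1
    have han : n < a := by
      simp only [Finset.mem_Icc] at ha hna; omega
    have hL : n < Lstable j a := lt_of_lt_of_le han le_Lstable
    rw [if_neg (by omega), dif_neg (by omega)]
    simp


def Hsum (N k n : ℕ) (j : Fin 2) : ℤ :=
  ∑ l ∈ listsLe (box N) k,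
    if LS l = n ∧ l.head?.map Prod.snd = some j then W l else 0

lemma mem_box_fst {N : ℕ} {l : List XX} (hl : l ∈ listsLe (box N) k)
    {y : XX} (hy : y ∈ l) : 1 ≤ y.1 ∧ y.1 ≤ N := by
  have := (mem_listsLe.1 hl).2 y hy
  simp only [box, Finset.mem_product, Finset.mem_Icc, Finset.mem_univ, and_true] at this
  exact this

lemma Hsum_zero (N k : ℕ) (j : Fin 2) : Hsum N k 0 j = 0 := by
  apply Finset.sum_eq_zero
  intro l hl
  match l with
  | [] => simp
  | x :: t =>
    rw [if_neg]
    rintro ⟨h1, -⟩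
    have := LS_pos (l := x :: t) (by simp) (fun y hy => (mem_box_fst hl hy).1)
    omega

lemma Hsum_eq_G (n : ℕ) : ∀ N k j, n ≤ N → n ≤ k → Hsum N k n j = G n j := by
  induction n using Nat.strong_induction_on with
  | _ n IH =>
    intro N k j hN hk
    rcases Nat.eq_zero_or_pos n with rfl | hn
    · rw [Hsum_zero, G_zero]
    obtain ⟨k', rfl⟩ : ∃ k', k = k' + 1 := ⟨k - 1, by omega⟩
    rw [Hsum, sum_listsLe_succ, G_eq n j N hN]
    have hnil : (if LS [] = n ∧ ([] : List XX).head?.map Prod.snd = some j then W [] else 0)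
        = 0 := by simp
    rw [hnil, zero_add, show box N = Finset.Icc 1 N ×ˢ Finset.univ from rfl, Finset.sum_product]
    apply Finset.sum_congr rfl
    intro a ha
    have ha1 : 1 ≤ a := (Finset.mem_Icc.1 ha).1
    have hL1 : 1 ≤ Lstable j a := Lstable_pos ha1
    rw [Finset.sum_eq_single j]
    rotate_left
    · rintro j₁ - hj₁
      apply Finset.sum_eq_zero
      intro t ht
      rw [if_neg]
      rintro ⟨-, h2⟩
      simp only [List.head?_cons, Option.map_some, Option.some.injEq] at h2
      exact hj₁ h2
    · intro h; exact absurd (Finset.mem_univ j) h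
    have key : ∀ t ∈ listsLe (Finset.Icc 1 N ×ˢ Finset.univ) k',
        (if LS ((a, j) :: t) = n ∧ ((a, j) :: t).head?.map Prod.snd = some j
          then W ((a, j) :: t) else 0)
        = ((if t = [] ∧ Lstable j a = n then (1 : ℤ) else 0) +
           ∑ j' : Fin 2, pstable j j' a *
             (if LS t = n - Lstable j a ∧ t.head?.map Prod.snd = some j' then W t else 0)) := by
      intro t ht
      match t with
      | [] => simp
      | b :: u =>
        have hLS : 1 ≤ LS (b :: u) :=
          LS_pos (by simp) (fun y hy => (mem_box_fst ht hy).1)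
        simp only [LS_cons] at hLS
        rw [Finset.sum_eq_single b.2]
        rotate_left
        · rintro j₁ - hj₁
          rw [if_neg, mul_zero]
          rintro ⟨-, h2⟩
          simp only [List.head?_cons, Option.map_some, Option.some.injEq] at h2
          exact hj₁ h2.symm
        · intro h; exact absurd (Finset.mem_univ _) h
        simp only [List.head?_cons, Option.map_some, Option.some.injEq, and_true, LS_cons]
        rw [if_neg (by simp : ¬((b :: u : List XX) = [] ∧ Lstable j a = n)), zero_add]
        split_ifs with h1 h2 h2
        · rfl
        · omega
        · omega
        · rw [mul_zero]
    rw [Finset.sum_congr rfl key, Finset.sum_add_distrib]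
    congr 1
    · by_cases hL : Lstable j a = n
      · simp only [hL, and_true]
        rw [Finset.sum_ite_eq' (listsLe (Finset.Icc 1 N ×ˢ Finset.univ) k') ([] : List XX)
          (fun _ => (1 : ℤ)), if_pos nil_mem_listsLe, if_pos trivial]
      · simp [hL]
    · rw [Finset.sum_comm]
      apply Finset.sum_congr rfl
      rintro j' -
      rw [← Finset.mul_sum]
      congr 1
      exact IH (n - Lstable j a) (by omega) N k' j' (by omega) (by omega)



lemma sigma_ext {m : ℕ} {c c' : Composition m} {k : Fin c.length → Fin 2}
    {k' : Fin c'.length → Fin 2} (h : c = c')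
    (hk : ∀ (i : ℕ) (h1 : i < c.length) (h2 : i < c'.length), k ⟨i, h1⟩ = k' ⟨i, h2⟩) :
    (⟨c, k⟩ : Σ c : Composition m, Fin c.length → Fin 2) = ⟨c', k'⟩ := by
  subst h
  exact congrArg (Sigma.mk c) (funext fun i => hk i.1 i.2 i.2)

lemma inner_eq (n m : ℕ) (hm1 : 1 ≤ m) (hmn : m ≤ n) :
    (∑ c : Composition m, ∑ k : Fin c.length → Fin 2,
      if (∑ i, Lstable (k i) (c.blocksFun i)) = n then
        ∏ i : Fin (c.length - 1),
          pstable (k ⟨i.1, by omega⟩) (k ⟨i.1 + 1, by omega⟩)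
            (c.blocksFun ⟨i.1, by omega⟩)
      else 0)
    = ∑ l ∈ listsLe (box n) n,
        if (l.map Prod.fst).sum = m ∧ l ≠ [] then (if LS l = n then W l else 0) else 0 := by
  classical
  rw [Finset.sum_sigma']
  conv_rhs => rw [← Finset.sum_filter]
  refine Finset.sum_bij'
    (fun x _ => List.ofFn fun idx => (x.1.blocksFun idx, x.2 idx))
    (fun l (hl : l ∈ (listsLe (box n) n).filter
        (fun l => (l.map Prod.fst).sum = m ∧ l ≠ [])) => ⟨⟨l.map Prod.fst,
        (by
          intro i hi
          rw [List.mem_map] at hi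
          obtain ⟨y, hy, rfl⟩ := hi
          have := (mem_box_fst (Finset.mem_filter.1 hl).1 hy).1
          omega),
        (Finset.mem_filter.1 hl).2.1⟩,
      fun idx => (l.get (Fin.cast (by simp [Composition.length]) idx)).2⟩)
    ?_ ?_ ?_ ?_ ?_
  · rintro ⟨c, k⟩ -
    rw [Finset.mem_filter]
    refine ⟨mem_listsLe.2 ⟨?_, ?_⟩, ?_, ?_⟩
    · simpa using c.length_le.trans hmn
    · intro y hy
      rw [List.mem_ofFn] at hy
      obtain ⟨idx, rfl⟩ := hy
      simp only [box, Finset.mem_product, Finset.mem_Icc, Finset.mem_univ, and_true]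
      exact ⟨c.one_le_blocksFun idx, (c.blocksFun_le idx).trans hmn⟩
    · rw [List.map_ofFn]
      have : (Prod.fst ∘ fun idx => (c.blocksFun idx, k idx)) = c.blocksFun := rfl
      rw [this, c.ofFn_blocksFun, c.blocks_sum]
    · have := c.length_pos_of_pos hm1
      simp only [ne_eq, List.ofFn_eq_nil_iff]
      omega
  · rintro l -
    simp
  · rintro ⟨c, k⟩ -
    refine sigma_ext ?_ ?_
    · apply Composition.ext
      show List.map Prod.fst (List.ofFn fun idx => (c.blocksFun idx, k idx)) = c.blocks
      rw [List.map_ofFn]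
      exact c.ofFn_blocksFun
    · intro i h1 h2
      simp [List.get_ofFn]
  · rintro l hl
    apply List.ext_get
    · simp [Composition.length]
    · intro idx h1 h2
      simp [List.get_ofFn, Composition.blocksFun, Composition.blocks, List.getElem_map]
  · rintro ⟨c, k⟩ -
    have hLS : LS (List.ofFn fun idx => (c.blocksFun idx, k idx))
        = ∑ i, Lstable (k i) (c.blocksFun i) := by
      simp [LS, List.map_ofFn, List.sum_ofFn, Function.comp]
    rw [hLS]
    refine if_congr Iff.rfl ?_ rfl
    rw [W_eq_prod]
    have hlen : (List.ofFn fun idx => (c.blocksFun idx, k idx)).length = c.length := by simp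
    rw [hlen,
      ← Fin.prod_univ_eq_prod_range
        (fun idx => pc (List.ofFn fun i2 => (c.blocksFun i2, k i2)) idx) (c.length - 1)]
    apply Finset.prod_congr rfl
    rintro i -
    have h0 : (i : ℕ) < c.length - 1 := i.isLt
    have hi1 : (i : ℕ) < c.length := by omega
    have hi2 : (i : ℕ) + 1 < c.length := by omega
    simp only [pc]
    rw [List.getD_eq_getElem _ _ (by simpa using hi1),
      List.getD_eq_getElem _ _ (by simpa using hi2)]
    simp [List.getElem_ofFn]


lemma coeff_stableGF (n : ℕ) :
    (PowerSeries.coeff n) stableGF = Hsum n n n 0 + Hsum n n n 1 := by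
  rw [stableGF, PowerSeries.coeff_mk]
  rw [Finset.sum_congr rfl fun m hm =>
    inner_eq n m (Finset.mem_Icc.1 hm).1 (Finset.mem_Icc.1 hm).2]
  rw [Finset.sum_comm]
  have step2 : ∀ l ∈ listsLe (box n) n,
      (∑ m ∈ Finset.Icc 1 n,
        if (l.map Prod.fst).sum = m ∧ l ≠ [] then (if LS l = n then W l else 0) else 0)
      = (if LS l = n ∧ l ≠ [] then W l else 0) := by
    intro l hl
    by_cases hLS : LS l = n ∧ l ≠ []
    · obtain ⟨h1, h2⟩ := hLS
      have e1 : 1 ≤ (l.map Prod.fst).sum :=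
        one_le_sumfst h2 (fun y hy => (mem_box_fst hl hy).1)
      have e2 : (l.map Prod.fst).sum ≤ n :=
        le_of_le_of_eq (sumfst_le_LS (fun y hy => (mem_box_fst hl hy).1)) h1
      have hb : ∀ m ∈ Finset.Icc 1 n,
          (if (l.map Prod.fst).sum = m ∧ l ≠ [] then (if LS l = n then W l else 0) else 0)
          = if (l.map Prod.fst).sum = m then W l else 0 := by
        intro m hm
        simp [h1, h2]
      rw [Finset.sum_congr rfl hb,
        Finset.sum_ite_eq (Finset.Icc 1 n) ((l.map Prod.fst).sum) (fun _ => W l),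
        if_pos (Finset.mem_Icc.2 ⟨e1, e2⟩), if_pos ⟨h1, h2⟩]
    · rw [if_neg hLS]
      apply Finset.sum_eq_zero
      intro m hm
      by_cases h2 : l = []
      · simp [h2]
      · have h1 : ¬ LS l = n := fun h => hLS ⟨h, h2⟩
        simp [h1]
  rw [Finset.sum_congr rfl step2]
  rw [Hsum, Hsum, ← Finset.sum_add_distrib]
  apply Finset.sum_congr rfl
  intro l hl
  match l with
  | [] => simp
  | (a, j₁) :: t =>
    simp only [List.head?_cons, Option.map_some, Option.some.injEq, ne_eq,
      reduceCtorEq, not_false_eq_true, and_true]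
    fin_cases j₁ <;> simp <;> exact if_congr Iff.rfl rfl rfl


lemma sum_range_even (n : ℕ) (F : ℕ → ℤ)
    (h1 : ∀ k ≤ n, ¬(2 ∣ k ∧ 1 ≤ k) → F k = 0)
    (h2 : ∀ a, 1 ≤ a → a ≤ n → n < 2 * a → F (2 * a) = 0) :
    ∑ k ∈ Finset.range (n + 1), F k = ∑ a ∈ Finset.Icc 1 n, F (2 * a) := by
  have e1 : ∑ k ∈ Finset.range (n + 1), F k
      = ∑ k ∈ (Finset.range (n + 1)).filter (fun k => 2 ∣ k ∧ 1 ≤ k), F k := by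
    refine (Finset.sum_subset (Finset.filter_subset _ _) ?_).symm
    intro k hk hk2
    refine h1 k (by simpa using Nat.lt_succ_iff.1 (Finset.mem_range.1 hk)) ?_
    intro hc
    exact hk2 (Finset.mem_filter.2 ⟨hk, hc⟩)
  have e2 : ∑ a ∈ Finset.Icc 1 n, F (2 * a)
      = ∑ a ∈ (Finset.Icc 1 n).filter (fun a => 2 * a ≤ n), F (2 * a) := by
    refine (Finset.sum_subset (Finset.filter_subset _ _) ?_).symm
    intro a ha ha2
    have hm := Finset.mem_Icc.1 ha
    refine h2 a hm.1 hm.2 ?_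
    by_contra hc
    exact ha2 (Finset.mem_filter.2 ⟨ha, by omega⟩)
  rw [e1, e2]
  refine Finset.sum_nbij' (fun k => k / 2) (fun a => 2 * a) ?_ ?_ ?_ ?_ ?_
  · intro k hk
    simp only [Finset.mem_filter, Finset.mem_range, Finset.mem_Icc] at *
    omega
  · intro a ha
    simp only [Finset.mem_filter, Finset.mem_range, Finset.mem_Icc] at *
    omega
  · intro k hk
    simp only [Finset.mem_filter, Finset.mem_range] at hk
    show 2 * (k / 2) = k
    omega
  · intro a ha
    show 2 * a / 2 = a
    omega
  · intro k hk
    simp only [Finset.mem_filter, Finset.mem_range] at hk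
    show F k = F (2 * (k / 2))
    have h : 2 * (k / 2) = k := by omega
    rw [h]

lemma sum_range_odd (n : ℕ) (F : ℕ → ℤ)
    (h1 : ∀ k ≤ n, (2 ∣ k) → F k = 0)
    (h2 : ∀ a, 1 ≤ a → a ≤ n → n < 2 * a - 1 → F (2 * a - 1) = 0) :
    ∑ k ∈ Finset.range (n + 1), F k = ∑ a ∈ Finset.Icc 1 n, F (2 * a - 1) := by
  have e1 : ∑ k ∈ Finset.range (n + 1), F k
      = ∑ k ∈ (Finset.range (n + 1)).filter (fun k => ¬ 2 ∣ k), F k := by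
    refine (Finset.sum_subset (Finset.filter_subset _ _) ?_).symm
    intro k hk hk2
    refine h1 k (by simpa using Nat.lt_succ_iff.1 (Finset.mem_range.1 hk)) ?_
    by_contra hc
    exact hk2 (Finset.mem_filter.2 ⟨hk, hc⟩)
  have e2 : ∑ a ∈ Finset.Icc 1 n, F (2 * a - 1)
      = ∑ a ∈ (Finset.Icc 1 n).filter (fun a => 2 * a - 1 ≤ n), F (2 * a - 1) := by
    refine (Finset.sum_subset (Finset.filter_subset _ _) ?_).symm
    intro a ha ha2
    have hm := Finset.mem_Icc.1 ha
    refine h2 a hm.1 hm.2 ?_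
    by_contra hc
    exact ha2 (Finset.mem_filter.2 ⟨ha, by omega⟩)
  rw [e1, e2]
  refine Finset.sum_nbij' (fun k => (k + 1) / 2) (fun a => 2 * a - 1) ?_ ?_ ?_ ?_ ?_
  · intro k hk
    simp only [Finset.mem_filter, Finset.mem_range, Finset.mem_Icc] at *
    omega
  · intro a ha
    simp only [Finset.mem_filter, Finset.mem_range, Finset.mem_Icc] at *
    omega
  · intro k hk
    simp only [Finset.mem_filter, Finset.mem_range] at hk
    show 2 * ((k + 1) / 2) - 1 = k
    omega
  · intro a ha
    simp only [Finset.mem_filter, Finset.mem_Icc] at ha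
    show (2 * a - 1 + 1) / 2 = a
    omega
  · intro k hk
    simp only [Finset.mem_filter, Finset.mem_range] at hk
    show F k = F (2 * ((k + 1) / 2) - 1)
    have h : 2 * ((k + 1) / 2) - 1 = k := by omega
    rw [h]

lemma sum_ind_even (n : ℕ) :
    (∑ a ∈ Finset.Icc 1 n, if 2 * a = n then (1 : ℤ) else 0)
      = if 2 ∣ n ∧ 2 ≤ n then 1 else 0 := by
  by_cases h : 2 ∣ n ∧ 2 ≤ n
  · obtain ⟨⟨b, rfl⟩, h2⟩ := h
    have hb : ∀ a ∈ Finset.Icc 1 (2 * b), (if 2 * a = 2 * b then (1 : ℤ) else 0)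
        = if a = b then 1 else 0 := by
      intro a ha
      exact if_congr (by omega) rfl rfl
    rw [Finset.sum_congr rfl hb, Finset.sum_ite_eq' (Finset.Icc 1 (2 * b)) b fun _ => (1 : ℤ),
      if_pos (Finset.mem_Icc.2 (by omega)), if_pos ⟨⟨b, rfl⟩, h2⟩]
  · rw [if_neg h]
    apply Finset.sum_eq_zero
    intro a ha
    have := Finset.mem_Icc.1 ha
    rw [if_neg]
    omega
  
lemma sum_ind_odd (n : ℕ) :
    (∑ a ∈ Finset.Icc 1 n, if 2 * a - 1 = n then (1 : ℤ) else 0)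
      = if ¬ 2 ∣ n then 1 else 0 := by
  by_cases h : 2 ∣ n
  · rw [if_neg (not_not_intro h)]
    apply Finset.sum_eq_zero
    intro a ha
    have := Finset.mem_Icc.1 ha
    rw [if_neg]
    omega
  · have hodd : ∃ b, n = 2 * b + 1 := ⟨n / 2, by omega⟩
    obtain ⟨b, rfl⟩ := hodd
    have hb : ∀ a ∈ Finset.Icc 1 (2 * b + 1), (if 2 * a - 1 = 2 * b + 1 then (1 : ℤ) else 0)
        = if a = b + 1 then 1 else 0 := by
      intro a ha
      have := Finset.mem_Icc.1 ha
      exact if_congr (by omega) rfl rfl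
    rw [Finset.sum_congr rfl hb,
      Finset.sum_ite_eq' (Finset.Icc 1 (2 * b + 1)) (b + 1) fun _ => (1 : ℤ),
      if_pos (Finset.mem_Icc.2 (by omega)), if_pos h]

noncomputable def q0e : PowerSeries ℤ := PowerSeries.mk fun n => if 2 ∣ n ∧ 2 ≤ n then 1 else 0
noncomputable def q0o : PowerSeries ℤ := PowerSeries.mk fun n => if ¬ 2 ∣ n then 1 else 0
noncomputable def qc1 : PowerSeries ℤ :=
  PowerSeries.mk fun n => if 2 ∣ n ∧ 2 ≤ n then (n : ℤ) - 1 else 0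
noncomputable def qc2 : PowerSeries ℤ :=
  PowerSeries.mk fun n => if 2 ∣ n ∧ 2 ≤ n then (n : ℤ) else 0
noncomputable def qc3 : PowerSeries ℤ :=
  PowerSeries.mk fun n => if ¬ 2 ∣ n then (n : ℤ) - 1 else 0
noncomputable def qc4 : PowerSeries ℤ :=
  PowerSeries.mk fun n => if ¬ 2 ∣ n then (n : ℤ) else 0
noncomputable def Aser : PowerSeries ℤ := PowerSeries.mk fun n => G n 0
noncomputable def Bser : PowerSeries ℤ := PowerSeries.mk fun n => G n 1

lemma hq0e' : q0e = X ^ 2 + q0e * X ^ 2 := by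
  ext n
  simp only [q0e, PowerSeries.coeff_mk, map_add, PowerSeries.coeff_X_pow,
    PowerSeries.coeff_mul_X_pow']
  split_ifs <;> simp_all <;> omega

lemma hq0o' : q0o = X + q0o * X ^ 2 := by
  ext n
  simp only [q0o, PowerSeries.coeff_mk, map_add, PowerSeries.coeff_X,
    PowerSeries.coeff_mul_X_pow']
  split_ifs <;> simp_all <;> omega

lemma hqc1' : qc1 = X ^ 2 + X ^ 4 + qc1 * X ^ 2 + qc1 * X ^ 2 - qc1 * X ^ 4 := by
  ext n
  simp only [qc1, PowerSeries.coeff_mk, map_add, map_sub, PowerSeries.coeff_X_pow,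
    PowerSeries.coeff_mul_X_pow']
  split_ifs <;> simp_all <;> omega

lemma hqc2' : qc2 = X ^ 2 + X ^ 2 + qc2 * X ^ 2 + qc2 * X ^ 2 - qc2 * X ^ 4 := by
  ext n
  simp only [qc2, PowerSeries.coeff_mk, map_add, map_sub, PowerSeries.coeff_X_pow,
    PowerSeries.coeff_mul_X_pow']
  split_ifs <;> simp_all <;> omega

lemma hqc3' : qc3 = X ^ 3 + X ^ 3 + qc3 * X ^ 2 + qc3 * X ^ 2 - qc3 * X ^ 4 := by
  ext n
  simp only [qc3, PowerSeries.coeff_mk, map_add, map_sub, PowerSeries.coeff_X_pow,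
    PowerSeries.coeff_mul_X_pow']
  split_ifs <;> simp_all <;> omega

lemma hqc4' : qc4 = X + X ^ 3 + qc4 * X ^ 2 + qc4 * X ^ 2 - qc4 * X ^ 4 := by
  ext n
  simp only [qc4, PowerSeries.coeff_mk, map_add, map_sub, PowerSeries.coeff_X_pow,
    PowerSeries.coeff_X, PowerSeries.coeff_mul_X_pow']
  split_ifs <;> simp_all <;> omega

lemma hA : Aser = q0e + qc1 * Aser + qc2 * Bser := by
  ext n
  have key : ∀ a ∈ Finset.Icc 1 n,
      ((if Lstable 0 a = n then (1 : ℤ) else 0)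
        + ∑ j' : Fin 2, pstable 0 j' a * G (n - Lstable 0 a) j')
      = (if 2 * a = n then (1 : ℤ) else 0)
        + ((2 * (a : ℤ) - 1) * G (n - 2 * a) 0 + (2 * (a : ℤ)) * G (n - 2 * a) 1) := by
    intro a ha
    have hL : Lstable 0 a = 2 * a := by simp [Lstable]
    have p00 : pstable 0 0 a = 2 * (a : ℤ) - 1 := by simp [pstable]
    have p01 : pstable 0 1 a = 2 * (a : ℤ) := by simp [pstable]
    rw [hL, Fin.sum_univ_two, p00, p01]
  have hG : (PowerSeries.coeff n) Aser
      = (∑ a ∈ Finset.Icc 1 n, if 2 * a = n then (1 : ℤ) else 0)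
        + ((∑ a ∈ Finset.Icc 1 n, (2 * (a : ℤ) - 1) * G (n - 2 * a) 0)
        + (∑ a ∈ Finset.Icc 1 n, (2 * (a : ℤ)) * G (n - 2 * a) 1)) := by
    rw [Aser, PowerSeries.coeff_mk, G_eq n 0 n le_rfl, Finset.sum_congr rfl key,
      Finset.sum_add_distrib, Finset.sum_add_distrib]
  rw [hG, map_add, map_add, ← add_assoc]
  congr 1
  · congr 1
    · rw [sum_ind_even, q0e, PowerSeries.coeff_mk]
    · rw [PowerSeries.coeff_mul, Finset.Nat.sum_antidiagonal_eq_sum_range_succ_mk]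
      simp only [qc1, Aser, PowerSeries.coeff_mk]
      rw [sum_range_even n (fun k => (if 2 ∣ k ∧ 2 ≤ k then (k : ℤ) - 1 else 0) * G (n - k) 0)
        (by intro k hk hk2
            show (if 2 ∣ k ∧ 2 ≤ k then (k : ℤ) - 1 else 0) * G (n - k) 0 = 0
            rw [if_neg (by omega), zero_mul])
        (by intro a h1 h2 h3
            show (if 2 ∣ 2 * a ∧ 2 ≤ 2 * a then ((2 * a : ℕ) : ℤ) - 1 else 0)
              * G (n - 2 * a) 0 = 0
            have h4 : n - 2 * a = 0 := by omega
            rw [h4, G_zero, mul_zero])]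
      apply Finset.sum_congr rfl
      intro a ha
      have := Finset.mem_Icc.1 ha
      show _ = (if 2 ∣ 2 * a ∧ 2 ≤ 2 * a then ((2 * a : ℕ) : ℤ) - 1 else 0) * G (n - 2 * a) 0
      rw [if_pos ⟨⟨a, rfl⟩, by omega⟩]
      push_cast
      ring
  · rw [PowerSeries.coeff_mul, Finset.Nat.sum_antidiagonal_eq_sum_range_succ_mk]
    simp only [qc2, Bser, PowerSeries.coeff_mk]
    rw [sum_range_even n (fun k => (if 2 ∣ k ∧ 2 ≤ k then (k : ℤ) else 0) * G (n - k) 1)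
      (by intro k hk hk2
          show (if 2 ∣ k ∧ 2 ≤ k then (k : ℤ) else 0) * G (n - k) 1 = 0
          rw [if_neg (by omega), zero_mul])
      (by intro a h1 h2 h3
          show (if 2 ∣ 2 * a ∧ 2 ≤ 2 * a then ((2 * a : ℕ) : ℤ) else 0) * G (n - 2 * a) 1 = 0
          have h4 : n - 2 * a = 0 := by omega
          rw [h4, G_zero, mul_zero])]
    apply Finset.sum_congr rfl
    intro a ha
    have := Finset.mem_Icc.1 ha
    show _ = (if 2 ∣ 2 * a ∧ 2 ≤ 2 * a then ((2 * a : ℕ) : ℤ) else 0) * G (n - 2 * a) 1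
    rw [if_pos ⟨⟨a, rfl⟩, by omega⟩]
    push_cast
    ring

lemma hB : Bser = q0o + qc3 * Aser + qc4 * Bser := by
  ext n
  have key : ∀ a ∈ Finset.Icc 1 n,
      ((if Lstable 1 a = n then (1 : ℤ) else 0)
        + ∑ j' : Fin 2, pstable 1 j' a * G (n - Lstable 1 a) j')
      = (if 2 * a - 1 = n then (1 : ℤ) else 0)
        + ((2 * (a : ℤ) - 2) * G (n - (2 * a - 1)) 0
          + (2 * (a : ℤ) - 1) * G (n - (2 * a - 1)) 1) := by
    intro a ha
    have hL : Lstable 1 a = 2 * a - 1 := by simp [Lstable]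
    have p10 : pstable 1 0 a = 2 * (a : ℤ) - 2 := by simp [pstable]
    have p11 : pstable 1 1 a = 2 * (a : ℤ) - 1 := by simp [pstable]
    rw [hL, Fin.sum_univ_two, p10, p11]
  have hG : (PowerSeries.coeff n) Bser
      = (∑ a ∈ Finset.Icc 1 n, if 2 * a - 1 = n then (1 : ℤ) else 0)
        + ((∑ a ∈ Finset.Icc 1 n, (2 * (a : ℤ) - 2) * G (n - (2 * a - 1)) 0)
        + (∑ a ∈ Finset.Icc 1 n, (2 * (a : ℤ) - 1) * G (n - (2 * a - 1)) 1)) := by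
    rw [Bser, PowerSeries.coeff_mk, G_eq n 1 n le_rfl, Finset.sum_congr rfl key,
      Finset.sum_add_distrib, Finset.sum_add_distrib]
  rw [hG, map_add, map_add, ← add_assoc]
  congr 1
  · congr 1
    · rw [sum_ind_odd, q0o, PowerSeries.coeff_mk]
    · rw [PowerSeries.coeff_mul, Finset.Nat.sum_antidiagonal_eq_sum_range_succ_mk]
      simp only [qc3, Aser, PowerSeries.coeff_mk]
      rw [sum_range_odd n (fun k => (if ¬ 2 ∣ k then (k : ℤ) - 1 else 0) * G (n - k) 0)
        (by intro k hk hk2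
            show (if ¬ 2 ∣ k then (k : ℤ) - 1 else 0) * G (n - k) 0 = 0
            rw [if_neg (by omega), zero_mul])
        (by intro a h1 h2 h3
            show (if ¬ 2 ∣ (2 * a - 1) then ((2 * a - 1 : ℕ) : ℤ) - 1 else 0)
              * G (n - (2 * a - 1)) 0 = 0
            have h4 : n - (2 * a - 1) = 0 := by omega
            rw [h4, G_zero, mul_zero])]
      apply Finset.sum_congr rfl
      intro a ha
      have := Finset.mem_Icc.1 ha
      show _ = (if ¬ 2 ∣ (2 * a - 1) then ((2 * a - 1 : ℕ) : ℤ) - 1 else 0)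
        * G (n - (2 * a - 1)) 0
      rw [if_pos (by omega)]
      congr 1
      omega
  · rw [PowerSeries.coeff_mul, Finset.Nat.sum_antidiagonal_eq_sum_range_succ_mk]
    simp only [qc4, Bser, PowerSeries.coeff_mk]
    rw [sum_range_odd n (fun k => (if ¬ 2 ∣ k then (k : ℤ) else 0) * G (n - k) 1)
      (by intro k hk hk2
          show (if ¬ 2 ∣ k then (k : ℤ) else 0) * G (n - k) 1 = 0
          rw [if_neg (by omega), zero_mul])
      (by intro a h1 h2 h3
          show (if ¬ 2 ∣ (2 * a - 1) then ((2 * a - 1 : ℕ) : ℤ) else 0)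
            * G (n - (2 * a - 1)) 1 = 0
          have h4 : n - (2 * a - 1) = 0 := by omega
          rw [h4, G_zero, mul_zero])]
    apply Finset.sum_congr rfl
    intro a ha
    have := Finset.mem_Icc.1 ha
    show _ = (if ¬ 2 ∣ (2 * a - 1) then ((2 * a - 1 : ℕ) : ℤ) else 0) * G (n - (2 * a - 1)) 1
    rw [if_pos (by omega)]
    congr 1
    omega

lemma stableGF_eq : stableGF = Aser + Bser := by
  ext n
  rw [coeff_stableGF, map_add, Aser, Bser, PowerSeries.coeff_mk, PowerSeries.coeff_mk,
    Hsum_eq_G n n n 0 le_rfl le_rfl, Hsum_eq_G n n n 1 le_rfl le_rfl]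

end StableAux

open StableAux in
/-- The generating function for locally stable horizontally convex polyominoes is
`t(1+t-t²-t³)/(1-t-3t²)`. -/
theorem stable_gf :
    stableGF * (1 - X - 3 * X ^ 2) = X * (1 + X - X ^ 2 - X ^ 3) := by
  have hq0e : q0e * (1 - X ^ 2) = X ^ 2 := by linear_combination hq0e'
  have hq0o : q0o * (1 - X ^ 2) = X := by linear_combination hq0o'
  have hqc1 : qc1 * (1 - X ^ 2) ^ 2 = X ^ 2 * (1 + X ^ 2) := by linear_combination hqc1'
  have hqc2 : qc2 * (1 - X ^ 2) ^ 2 = X ^ 2 + X ^ 2 := by linear_combination hqc2'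
  have hqc3 : qc3 * (1 - X ^ 2) ^ 2 = X ^ 3 + X ^ 3 := by linear_combination hqc3'
  have hqc4 : qc4 * (1 - X ^ 2) ^ 2 = X * (1 + X ^ 2) := by linear_combination hqc4'
  have h1 : (1 - X ^ 2) ^ 2 * Aser
      = X ^ 2 * (1 - X ^ 2) + X ^ 2 * (1 + X ^ 2) * Aser + (X ^ 2 + X ^ 2) * Bser := by
    linear_combination (1 - X ^ 2) ^ 2 * hA + (1 - X ^ 2) * hq0e + Aser * hqc1 + Bser * hqc2
  have h2 : (1 - X ^ 2) ^ 2 * Bser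
      = X * (1 - X ^ 2) + (X ^ 3 + X ^ 3) * Aser + X * (1 + X ^ 2) * Bser := by
    linear_combination (1 - X ^ 2) ^ 2 * hB + (1 - X ^ 2) * hq0o + Aser * hqc3 + Bser * hqc4
  have hnz : ((1 - X ^ 2 : PowerSeries ℤ)) ^ 2 ≠ 0 := by
    apply pow_ne_zero
    intro h
    have := congrArg (PowerSeries.constantCoeff) h
    simp [map_pow] at this
  rw [stableGF_eq]
  apply mul_left_cancel₀ hnz
  linear_combination ((1 - X ^ 2) * (1 - X - X ^ 2)) * h1 + (1 - X ^ 2) * h2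
end
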